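/- arXiv:1509.05263 — 12 statements merged into one kernel-verified Lean document; each statement's English description precedes it below -/
import Mathlib

section
/- Let π be a representation of a group G on a Banach space X. If the subspace X*_π̄ + Ann(X**_π̿) is weak-* dense in X*, where π̿ denotes the dual representation of π̄ on X**, then X_π ∩ Ann(X*_π̄) = {0}. -/
namespace WeakDual

variable {𝕜 X : Type*} [CommRing 𝕜] [TopologicalSpace 𝕜] [IsTopologicalRing 𝕜] [T2Space 𝕜]
  [AddCommGroup X] [TopologicalSpace X] [Module 𝕜 X] [SeparatingDual 𝕜 X]

theorem eq_zero_of_dense_forall_apply_eq_zero {S : Set (WeakDual 𝕜 X)} (hS : Dense S) {x : X}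
    (hx : ∀ f ∈ S, f x = 0) : x = 0 := by
  have hvanish : (fun f : WeakDual 𝕜 X ↦ f x) = fun _ ↦ 0 :=
    Continuous.ext_on hS (eval_continuous x) continuous_const hx
  exact SeparatingDual.eq_zero_of_forall_dual_eq_zero fun f ↦
    congrFun hvanish (StrongDual.toWeakDual f)

end WeakDual

theorem invariant_inter_ann_eq_zero_of_weakStarDense_general
    {G X : Type*} [Group G] [NormedAddCommGroup X] [NormedSpace ℝ X]
    (π : G →* (X ≃L[ℝ] X))
    (hdense : Dense {f : WeakDual ℝ X |
      ∃ f₁ f₂ : StrongDual ℝ X,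
        (∀ (g : G) (x : X), f₁ (π g x) = f₁ x) ∧
        (∀ F : StrongDual ℝ (StrongDual ℝ X),
            (∀ (g : G) (h : StrongDual ℝ X),
              F (h.comp ((π g⁻¹ : X ≃L[ℝ] X) : X →L[ℝ] X)) = F h) → F f₂ = 0) ∧
        StrongDual.toWeakDual (f₁ + f₂) = f}) :
    ∀ x : X, (∀ g : G, π g x = x) →
      (∀ f : StrongDual ℝ X, (∀ (g : G) (y : X), f (π g y) = f y) → f x = 0) →
      x = 0 := by
  intro x hx hann
  refine WeakDual.eq_zero_of_dense_forall_apply_eq_zero hdense ?_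
  rintro _ ⟨f₁, f₂, hf₁, hf₂, rfl⟩
  -- The image of an invariant vector in `X**` is `π̿`-invariant.
  have hf₂x : f₂ x = 0 := by
    simpa using hf₂ (NormedSpace.inclusionInDoubleDual ℝ X x) fun g h ↦ by
      simp only [NormedSpace.dual_def, ContinuousLinearMap.comp_apply,
        ContinuousLinearEquiv.coe_coe, hx]
  change f₁ x + f₂ x = 0
  rw [hann f₁ hf₁, hf₂x, add_zero]

/-- Let `π` be a representation of a group `G` on a Banach space `X`.
If the subspace `X*_π̄ + Ann(X**_π̿)` is weak-* dense in `X*` (where `π̄` is the dual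
representation on `X*`, given by `(π̄ g f) x = f (π g⁻¹ x)`, and `π̿` its dual on `X**`),
then `X_π ∩ Ann(X*_π̄) = {0}`. -/
theorem invariant_inter_ann_eq_zero_of_weakStarDense
    {G X : Type*} [Group G] [NormedAddCommGroup X] [NormedSpace ℝ X] [CompleteSpace X]
    (π : G →* (X ≃L[ℝ] X))
    (hdense : Dense {f : WeakDual ℝ X |
      ∃ f₁ f₂ : StrongDual ℝ X,
        (∀ (g : G) (x : X), f₁ (π g x) = f₁ x) ∧
        (∀ F : StrongDual ℝ (StrongDual ℝ X),
            (∀ (g : G) (h : StrongDual ℝ X),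
              F (h.comp ((π g⁻¹ : X ≃L[ℝ] X) : X →L[ℝ] X)) = F h) → F f₂ = 0) ∧
        StrongDual.toWeakDual (f₁ + f₂) = f}) :
    ∀ x : X, (∀ g : G, π g x = x) →
      (∀ f : StrongDual ℝ X, (∀ (g : G) (y : X), f (π g y) = f y) → f x = 0) →
      x = 0 :=
  invariant_inter_ann_eq_zero_of_weakStarDense_general π hdense
end

section
/- Let π be a representation of a group G on a Banach space X. Suppose that for every x ∈ X the closed convex hull of the orbit O(x) = {π(g)x : g ∈ G} contains a π-invariant vector. Then X = X_π + Ann(X*_π̄). -/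
theorem ContinuousLinearMap.apply_eq_of_mem_closure_convexHull {𝕜 E F : Type*} [Semiring 𝕜]
    [PartialOrder 𝕜] [AddCommMonoid E] [Module 𝕜 E] [TopologicalSpace E] [AddCommMonoid F]
    [Module 𝕜 F] [TopologicalSpace F] [T1Space F] (f : E →L[𝕜] F) {s : Set E} {c : F}
    (hs : ∀ z ∈ s, f z = c) {y : E} (hy : y ∈ closure (convexHull 𝕜 s)) : f y = c := by
  have hsub : closure (convexHull 𝕜 s) ⊆ f ⁻¹' {c} :=
    closure_minimal (convexHull_min hs ((convex_singleton c).linear_preimage f.toLinearMap))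
      (isClosed_singleton.preimage f.continuous)
  exact hsub hy

theorem decomposition_of_fixed_point_in_orbit_hull_general
    {G X : Type*} [Group G] [NormedAddCommGroup X] [NormedSpace ℝ X]
    (π : G →* (X ≃L[ℝ] X))
    (hfix : ∀ x : X, ∃ y ∈ closure (convexHull ℝ {z : X | ∃ g : G, z = π g x}),
        ∀ g : G, π g y = y) :
    ∀ x : X, ∃ y z : X, (∀ g : G, π g y = y) ∧
      (∀ f : StrongDual ℝ X, (∀ (g : G) (w : X), f (π g w) = f w) → f z = 0) ∧
      x = y + z := by
  intro x
  obtain ⟨y, hy, hinv⟩ := hfix x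
  refine ⟨y, x - y, hinv, fun f hf => ?_, (add_sub_cancel y x).symm⟩
  have hfy : f y = f x :=
    f.apply_eq_of_mem_closure_convexHull (by rintro _ ⟨g, rfl⟩; exact hf g x) hy
  rw [map_sub, hfy, sub_self]

/-- Let `π` be a representation of a group `G` on a Banach space `X`. If for every
`x ∈ X` the closed convex hull of the orbit `O(x) = {π g x : g ∈ G}` contains an
invariant vector, then `X = X_π + Ann(X*_π̄)`. -/
theorem decomposition_of_fixed_point_in_orbit_hull
    {G X : Type*} [Group G] [NormedAddCommGroup X] [NormedSpace ℝ X] [CompleteSpace X]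
    (π : G →* (X ≃L[ℝ] X))
    (hfix : ∀ x : X, ∃ y ∈ closure (convexHull ℝ {z : X | ∃ g : G, z = π g x}),
        ∀ g : G, π g y = y) :
    ∀ x : X, ∃ y z : X, (∀ g : G, π g y = y) ∧
      (∀ f : StrongDual ℝ X, (∀ (g : G) (w : X), f (π g w) = f w) → f z = 0) ∧
      x = y + z :=
  decomposition_of_fixed_point_in_orbit_hull_general π hfix
end

section
/- Let π be a representation of a group G on a Banach space X. Suppose that for every f ∈ X* the weak-* closed convex hull of the orbit O(f) = {π̄(g)f : g ∈ G} contains a π̄-invariant functional. Then X* = X*_π̄ + Ann(X_π). -/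
/-! Take `f₁` to be the invariant functional `f₀` in the weak-* closed convex hull of the orbit
of `f`. Each `π̄ g f` agrees with `f` on `X_π`, and agreeing with `f` at a fixed vector is a
weak-* closed convex condition, so `f₀` agrees with `f` on `X_π` too: `f - f₀ ∈ Ann X_π`. -/

theorem WeakDual.apply_eq_of_mem_closure_convexHull {𝕜 E : Type*} [Field 𝕜] [LinearOrder 𝕜]
    [IsStrictOrderedRing 𝕜] [TopologicalSpace 𝕜] [T1Space 𝕜] [ContinuousAdd 𝕜]
    [ContinuousConstSMul 𝕜 𝕜] [AddCommMonoid E] [Module 𝕜 E] [TopologicalSpace E]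
    {s : Set (WeakDual 𝕜 E)} {x : E} {c : 𝕜} (hs : ∀ φ ∈ s, φ x = c)
    {φ : WeakDual 𝕜 E} (hφ : φ ∈ closure (convexHull 𝕜 s)) : φ x = c := by
  have hconvex : Convex 𝕜 {ψ : WeakDual 𝕜 E | ψ x = c} :=
    (convex_singleton c).is_linear_preimage (f := fun ψ : WeakDual 𝕜 E => ψ x)
      ⟨fun _ _ => rfl, fun _ _ => rfl⟩
  have hclosed : IsClosed {ψ : WeakDual 𝕜 E | ψ x = c} :=
    isClosed_singleton.preimage (WeakDual.eval_continuous x)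
  exact closure_minimal (convexHull_min hs hconvex) hclosed hφ

theorem dual_decomposition_of_fixed_point_in_weakStar_orbit_hull_general
    {G X : Type*} [Group G] [NormedAddCommGroup X] [NormedSpace ℝ X]
    (π : G →* (X ≃L[ℝ] X))
    (hfix : ∀ f : StrongDual ℝ X,
      ∃ f₀ ∈ closure (convexHull ℝ {h : WeakDual ℝ X | ∃ g : G,
          h = StrongDual.toWeakDual (f.comp ((π g⁻¹ : X ≃L[ℝ] X) : X →L[ℝ] X))}),
        ∀ (g : G) (x : X), f₀ (π g x) = f₀ x) :
    ∀ f : StrongDual ℝ X, ∃ f₁ f₂ : StrongDual ℝ X,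
      (∀ (g : G) (x : X), f₁ (π g x) = f₁ x) ∧
      (∀ x : X, (∀ g : G, π g x = x) → f₂ x = 0) ∧
      f = f₁ + f₂ := by
  intro f
  obtain ⟨f₀, hf₀, hinv⟩ := hfix f
  refine ⟨WeakDual.toStrongDual f₀, f - WeakDual.toStrongDual f₀, hinv, fun x hx => ?_, by abel⟩
  have hagree : f₀ x = f x :=
    WeakDual.apply_eq_of_mem_closure_convexHull
      (by rintro _ ⟨g, rfl⟩; exact congrArg f (hx g⁻¹)) hf₀
  simpa [sub_eq_zero] using hagree.symm

/-- Let `π` be a representation of a group `G` on a Banach space `X`. If for every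
`f ∈ X*` the weak-* closed convex hull of the orbit `O(f) = {π̄ g f : g ∈ G}` (where
`π̄ g f = f ∘ π g⁻¹` is the dual representation) contains a `π̄`-invariant functional,
then `X* = X*_π̄ + Ann(X_π)`. -/
theorem dual_decomposition_of_fixed_point_in_weakStar_orbit_hull
    {G X : Type*} [Group G] [NormedAddCommGroup X] [NormedSpace ℝ X] [CompleteSpace X]
    (π : G →* (X ≃L[ℝ] X))
    (hfix : ∀ f : StrongDual ℝ X,
      ∃ f₀ ∈ closure (convexHull ℝ {h : WeakDual ℝ X | ∃ g : G,
          h = StrongDual.toWeakDual (f.comp ((π g⁻¹ : X ≃L[ℝ] X) : X →L[ℝ] X))}),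
        ∀ (g : G) (x : X), f₀ (π g x) = f₀ x) :
    ∀ f : StrongDual ℝ X, ∃ f₁ f₂ : StrongDual ℝ X,
      (∀ (g : G) (x : X), f₁ (π g x) = f₁ x) ∧
      (∀ x : X, (∀ g : G, π g x = x) → f₂ x = 0) ∧
      f = f₁ + f₂ :=
  dual_decomposition_of_fixed_point_in_weakStar_orbit_hull_general π hfix
end

section
/- Let G be a compact topological group and π a strongly continuous representation of G on a Banach space X (i.e., g ↦ π(g)x is continuous for each x ∈ X). Then X decomposes as the direct sum of closed subspaces X = X_π ⊕ Ann(X*_π̄). Moreover, if π is isometric, the corresponding projection of X onto X_π (with kernel Ann(X*_π̄)) has norm at most 1. -/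
/-!
Averaging against the normalized Haar measure `μ` gives `P x = ∫ π(g) x dμ(g)`, a bounded
operator by the uniform boundedness principle. Left invariance of `μ` makes `P x` invariant and
right invariance (compact groups are unimodular) gives `P ∘ π(g) = P`. Invariant vectors and
invariant functionals pass unchanged through the average, so `P` is a projection onto `X_π`
with `ker P ⊆ Ann(X*_π̄)`. Conversely, for every functional `f` the functional `f ∘ P` is
invariant, so if `x` is annihilated by all invariant functionals then every `f` vanishes at
`P x`, i.e. `P x = 0`.
-/

open MeasureTheory

section StrongIntegral

variable {ι 𝕜 E F : Type*}

theorem exists_forall_opNorm_le_of_continuous_apply [NontriviallyNormedField 𝕜]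
    [NormedAddCommGroup E] [NormedSpace 𝕜 E] [CompleteSpace E]
    [NormedAddCommGroup F] [NormedSpace 𝕜 F]
    [TopologicalSpace ι] [CompactSpace ι] {T : ι → E →L[𝕜] F}
    (hT : ∀ x, Continuous fun i ↦ T i x) : ∃ C, ∀ i, ‖T i‖ ≤ C :=
  banach_steinhaus fun x ↦
    let ⟨C, hC⟩ := (isCompact_range (hT x)).isBounded.exists_norm_le
    ⟨C, fun i ↦ hC _ ⟨i, rfl⟩⟩

variable [MeasurableSpace ι] (μ : Measure ι) [IsFiniteMeasure μ]
  [NormedAddCommGroup E] [NormedSpace ℝ E] [NormedAddCommGroup F] [NormedSpace ℝ F]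
  {T : ι → E →L[ℝ] F}

theorem norm_integral_apply_le {C : ℝ} (hC : ∀ i x, ‖T i x‖ ≤ C * ‖x‖) (x : E) :
    ‖∫ i, T i x ∂μ‖ ≤ C * μ.real Set.univ * ‖x‖ := by
  calc ‖∫ i, T i x ∂μ‖ ≤ C * ‖x‖ * μ.real Set.univ :=
        norm_integral_le_of_norm_le_const (.of_forall fun i ↦ hC i x)
    _ = C * μ.real Set.univ * ‖x‖ := by ring

variable [TopologicalSpace ι] [CompactSpace ι] [OpensMeasurableSpace ι]

theorem integrable_of_continuous {Y : Type*} [NormedAddCommGroup Y] {f : ι → Y}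
    (hf : Continuous f) : Integrable f μ :=
  hf.integrable_of_hasCompactSupport (HasCompactSupport.of_compactSpace _)

/-- `T` is only strongly continuous, so this integral is taken pointwise, not in the operator
norm. -/
noncomputable def strongIntegral [CompleteSpace E] (T : ι → E →L[ℝ] F)
    (hT : ∀ x, Continuous fun i ↦ T i x) : E →L[ℝ] F :=
  LinearMap.mkContinuousOfExistsBound
    { toFun x := ∫ i, T i x ∂μ
      map_add' x y := by
        simp only [map_add]
        exact integral_add (integrable_of_continuous μ (hT x))
          (integrable_of_continuous μ (hT y))
      map_smul' c x := by
        simp only [map_smul, RingHom.id_apply]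
        exact integral_smul c _ }
    (let ⟨C, hC⟩ := exists_forall_opNorm_le_of_continuous_apply hT
     ⟨C * μ.real Set.univ,
      norm_integral_apply_le μ fun i x ↦ (T i).le_of_opNorm_le (hC i) x⟩)

variable [CompleteSpace E]

theorem strongIntegral_apply (hT : ∀ x, Continuous fun i ↦ T i x) (x : E) :
    strongIntegral μ T hT x = ∫ i, T i x ∂μ :=
  rfl

theorem opNorm_strongIntegral_le (hT : ∀ x, Continuous fun i ↦ T i x) {C : ℝ} (hC₀ : 0 ≤ C)
    (hC : ∀ i x, ‖T i x‖ ≤ C * ‖x‖) : ‖strongIntegral μ T hT‖ ≤ C * μ.real Set.univ :=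
  ContinuousLinearMap.opNorm_le_bound _ (by positivity) (norm_integral_apply_le μ hC)

end StrongIntegral

section GroupAverage

variable {G X : Type*} [Group G] [TopologicalSpace G] [CompactSpace G] [MeasurableSpace G]
  [OpensMeasurableSpace G] [NormedAddCommGroup X] [NormedSpace ℝ X] [CompleteSpace X]
  (μ : Measure G) [IsProbabilityMeasure μ] (π : G →* (X ≃L[ℝ] X))
  (hcont : ∀ x, Continuous fun g ↦ π g x)

noncomputable def groupAverage : X →L[ℝ] X :=
  strongIntegral μ (fun g ↦ (π g : X →L[ℝ] X)) hcont

theorem groupAverage_apply (x : X) : groupAverage μ π hcont x = ∫ g, π g x ∂μ :=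
  rfl

theorem map_groupAverage [MeasurableMul G] [μ.IsMulLeftInvariant] (x : X) (h : G) :
    π h (groupAverage μ π hcont x) = groupAverage μ π hcont x := by
  have hmul : ∀ g, π h (π g x) = π (h * g) x := fun g ↦ by rw [map_mul]; rfl
  rw [groupAverage_apply, ← ContinuousLinearEquiv.integral_comp_comm]
  simp_rw [hmul]
  exact integral_mul_left_eq_self (fun g ↦ π g x) h

theorem groupAverage_map [MeasurableMul G] [μ.IsMulRightInvariant] (x : X) (h : G) :
    groupAverage μ π hcont (π h x) = groupAverage μ π hcont x := by
  have hmul : ∀ g, π g (π h x) = π (g * h) x := fun g ↦ by rw [map_mul]; rfl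
  simp_rw [groupAverage_apply, hmul]
  exact integral_mul_right_eq_self (fun g ↦ π g x) h

theorem groupAverage_eq_self {x : X} (hx : ∀ g, π g x = x) : groupAverage μ π hcont x = x := by
  simp [groupAverage_apply, hx]

theorem apply_groupAverage_of_invariant {f : StrongDual ℝ X}
    (hf : ∀ g y, f (π g y) = f y) (x : X) : f (groupAverage μ π hcont x) = f x := by
  rw [groupAverage_apply, ← ContinuousLinearMap.integral_comp_comm f
    (integrable_of_continuous μ (hcont x))]
  simp [hf]

theorem groupAverage_eq_zero_iff [MeasurableMul G] [μ.IsMulRightInvariant] (x : X) :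
    groupAverage μ π hcont x = 0 ↔
      ∀ f : StrongDual ℝ X, (∀ g y, f (π g y) = f y) → f x = 0 := by
  refine ⟨fun hx f hf ↦ ?_,
    fun hx ↦ SeparatingDual.eq_zero_of_forall_dual_eq_zero (R := ℝ) fun f ↦ ?_⟩
  · rw [← apply_groupAverage_of_invariant μ π hcont hf, hx, map_zero]
  · exact hx (f.comp (groupAverage μ π hcont)) fun g y ↦ by
      simp only [ContinuousLinearMap.comp_apply, groupAverage_map]

theorem opNorm_groupAverage_le_one (hiso : ∀ g x, ‖π g x‖ = ‖x‖) :
    ‖groupAverage μ π hcont‖ ≤ 1 := by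
  refine (opNorm_strongIntegral_le μ hcont zero_le_one fun g x ↦ ?_).trans_eq (by simp)
  simpa using (hiso g x).le

end GroupAverage

section Haar

open Measure TopologicalSpace

variable {G : Type*} [Group G] [TopologicalSpace G] [IsTopologicalGroup G] [CompactSpace G]
  [MeasurableSpace G] [BorelSpace G]

instance isProbabilityMeasure_haarMeasure_top :
    IsProbabilityMeasure (haarMeasure (⊤ : PositiveCompacts G)) :=
  ⟨by simpa using haarMeasure_self (K₀ := (⊤ : PositiveCompacts G))⟩

theorem isMulRightInvariant_of_isProbabilityMeasure (μ : Measure G) [μ.IsHaarMeasure]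
    [IsProbabilityMeasure μ] : μ.IsMulRightInvariant := by
  refine ⟨fun g ↦ ?_⟩
  have hsmul := isMulInvariant_eq_smul_of_compactSpace (map (· * g) μ) μ
  have hfactor : haarScalarFactor (map (· * g) μ) μ = 1 := by
    simpa [map_apply (measurable_mul_const g) MeasurableSet.univ] using
      (congrArg (· Set.univ) hsmul).symm
  rw [hsmul, hfactor, one_smul]

end Haar

/-- Let `G` be a compact topological group and `π` a strongly continuous representation
of `G` on a Banach space `X`. Then `X = X_π ⊕ Ann(X*_π̄)`: there is a bounded linear
projection `P` of `X` onto the subspace of invariant vectors whose kernel is the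
preannihilator of the invariant functionals. Moreover, if `π` is isometric then
`‖P‖ ≤ 1`. -/
theorem compactGroup_decomposition_invariant_vectors
    {G X : Type*} [Group G] [TopologicalSpace G] [IsTopologicalGroup G] [CompactSpace G]
    [NormedAddCommGroup X] [NormedSpace ℝ X] [CompleteSpace X]
    (π : G →* (X ≃L[ℝ] X))
    (hcont : ∀ x : X, Continuous fun g : G => π g x) :
    ∃ P : X →L[ℝ] X,
      (∀ (x : X) (g : G), π g (P x) = P x) ∧
      (∀ x : X, (∀ g : G, π g x = x) → P x = x) ∧
      (∀ x : X, P x = 0 ↔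
        ∀ f : StrongDual ℝ X, (∀ (g : G) (y : X), f (π g y) = f y) → f x = 0) ∧
      ((∀ (g : G) (x : X), ‖π g x‖ = ‖x‖) → ‖P‖ ≤ 1) := by
  borelize G
  let μ := Measure.haarMeasure (⊤ : TopologicalSpace.PositiveCompacts G)
  have := isMulRightInvariant_of_isProbabilityMeasure μ
  exact ⟨groupAverage μ π hcont, map_groupAverage μ π hcont,
    fun _ ↦ groupAverage_eq_self μ π hcont, groupAverage_eq_zero_iff μ π hcont,
    opNorm_groupAverage_le_one μ π hcont⟩
end

section
/- Let π be a uniformly bounded representation of an amenable discrete group G on a Banach space X. Then (i) X* = X*_π̄ + Ann(X_π), and (ii) X_π ∩ Ann(X*_π̄) = {0}. -/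
/-!
Averaging the matrix coefficients `g ↦ f (π g⁻¹ x)` of a functional `f` against an invariant
mean produces a `π̄`-invariant functional `f₁` which agrees with `f` on `X_π`, because the
coefficients of an invariant vector are constant. Then `f = f₁ + (f - f₁)` gives (i). For (ii),
average a Hahn–Banach functional norming an invariant vector `x`: the result is invariant and
still takes the value `‖x‖` at `x`.
-/

/-- A discrete group `G` is amenable if there is a left-invariant mean on `ℓ∞(G)`,
i.e. a positive linear functional `m` on the bounded (continuous, w.r.t. the discrete
topology) real functions on `G` with `m 1 = 1` and `m (g · f) = m f` for all `g`,
where `(g · f)(h) = f (g⁻¹ h)`. -/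
def IsAmenable (G : Type*) [Group G] : Prop :=
  letI : TopologicalSpace G := ⊥
  ∃ m : BoundedContinuousFunction G ℝ →ₗ[ℝ] ℝ,
    (∀ f : BoundedContinuousFunction G ℝ, (∀ x, 0 ≤ f x) → 0 ≤ m f) ∧
    m 1 = 1 ∧
    ∀ (g : G) (f : BoundedContinuousFunction G ℝ),
      m (f.compContinuous ⟨fun h => g⁻¹ * h, by
        letI : DiscreteTopology G := ⟨rfl⟩
        exact continuous_of_discreteTopology⟩) = m f

open BoundedContinuousFunction

theorem BoundedContinuousFunction.abs_map_le_norm_of_nonneg_of_map_one {α : Type*}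
    [TopologicalSpace α] {m : (α →ᵇ ℝ) →ₗ[ℝ] ℝ} (hpos : ∀ u : α →ᵇ ℝ, (∀ a, 0 ≤ u a) → 0 ≤ m u)
    (hone : m 1 = 1) (u : α →ᵇ ℝ) : |m u| ≤ ‖u‖ := by
  have hupper : 0 ≤ m (‖u‖ • 1 - u) :=
    hpos _ fun a => by simpa using (abs_le.mp (u.norm_coe_le_norm a)).2
  have hlower : 0 ≤ m (‖u‖ • 1 + u) :=
    hpos _ fun a => by simpa [neg_le_iff_add_nonneg'] using (abs_le.mp (u.norm_coe_le_norm a)).1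
  rw [map_sub, map_smul, hone, smul_eq_mul, mul_one, sub_nonneg] at hupper
  rw [map_add, map_smul, hone, smul_eq_mul, mul_one] at hlower
  exact abs_le.mpr ⟨by linarith, hupper⟩

section Coefficients

variable {G X : Type*} [Group G] [NormedAddCommGroup X] [NormedSpace ℝ X]
  (π : G →* (X ≃L[ℝ] X)) {C : ℝ} (hC : ∀ g : G, ‖(π g : X →L[ℝ] X)‖ ≤ C) (f : StrongDual ℝ X)

include hC in
theorem norm_apply_representation_inv_le (x : X) (g : G) : ‖f (π g⁻¹ x)‖ ≤ ‖f‖ * (C * ‖x‖) :=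
  calc ‖f (π g⁻¹ x)‖ ≤ ‖f‖ * ‖(π g⁻¹ : X →L[ℝ] X) x‖ := f.le_opNorm _
    _ ≤ ‖f‖ * (C * ‖x‖) := by
      gcongr
      exact ((π g⁻¹ : X →L[ℝ] X).le_opNorm x).trans (by gcongr; exact hC g⁻¹)

variable [TopologicalSpace G] [DiscreteTopology G]

noncomputable def coefficientMap : X →L[ℝ] (G →ᵇ ℝ) :=
  LinearMap.mkContinuous
    { toFun := fun x => ofNormedAddCommGroupDiscrete (fun g => f (π g⁻¹ x)) _
        (norm_apply_representation_inv_le π hC f x)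
      map_add' := fun x y => by ext g; simp
      map_smul' := fun c x => by ext g; simp }
    (‖f‖ * C) fun x => by
      have hC0 : 0 ≤ C := (norm_nonneg _).trans (hC 1)
      rw [mul_assoc]
      exact norm_ofNormedAddCommGroup_le _ (by positivity)
        (norm_apply_representation_inv_le π hC f x)

@[simp]
theorem coefficientMap_apply (x : X) (g : G) : coefficientMap π hC f x g = f (π g⁻¹ x) := rfl

theorem coefficientMap_representation (h : G) (x : X) :
    coefficientMap π hC f (π h x) =
      (coefficientMap π hC f x).compContinuous ⟨(h⁻¹ * ·), continuous_of_discreteTopology⟩ := by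
  ext g
  simp only [coefficientMap_apply, compContinuous_apply, ContinuousMap.coe_mk, mul_inv_rev,
    inv_inv, map_mul]
  rfl

theorem coefficientMap_of_invariant {x : X} (hx : ∀ g, π g x = x) :
    coefficientMap π hC f x = f x • 1 := by
  ext g
  rw [coefficientMap_apply, hx]
  simp

variable {π} in
include hC in
theorem exists_invariant_dual_eq_on_invariant {M : (G →ᵇ ℝ) →L[ℝ] ℝ} (hM : M 1 = 1)
    (hMinv : ∀ (h : G) (u : G →ᵇ ℝ),
      M (u.compContinuous ⟨(h⁻¹ * ·), continuous_of_discreteTopology⟩) = M u) :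
    ∃ f₁ : StrongDual ℝ X, (∀ (g : G) (x : X), f₁ (π g x) = f₁ x) ∧
      ∀ x : X, (∀ g : G, π g x = x) → f₁ x = f x := by
  refine ⟨M.comp (coefficientMap π hC f), fun h x => ?_, fun x hx => ?_⟩
  · simp only [ContinuousLinearMap.comp_apply, coefficientMap_representation, hMinv]
  · simp [coefficientMap_of_invariant π hC f hx, hM]

end Coefficients

theorem amenable_dual_decomposition_and_trivial_intersection_general
    {G X : Type*} [Group G] [NormedAddCommGroup X] [NormedSpace ℝ X]
    (hG : IsAmenable G) (π : G →* (X ≃L[ℝ] X))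
    (hub : ∃ C : ℝ, ∀ g : G, ‖((π g : X ≃L[ℝ] X) : X →L[ℝ] X)‖ ≤ C) :
    (∀ f : StrongDual ℝ X, ∃ f₁ f₂ : StrongDual ℝ X,
      (∀ (g : G) (x : X), f₁ (π g x) = f₁ x) ∧
      (∀ x : X, (∀ g : G, π g x = x) → f₂ x = 0) ∧
      f = f₁ + f₂) ∧
    (∀ x : X, (∀ g : G, π g x = x) →
      (∀ f : StrongDual ℝ X, (∀ (g : G) (y : X), f (π g y) = f y) → f x = 0) →
      x = 0) := by
  let : TopologicalSpace G := ⊥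
  have : DiscreteTopology G := ⟨rfl⟩
  obtain ⟨m, hpos, hone, hinv⟩ := hG
  obtain ⟨C, hC⟩ := hub
  let M : (G →ᵇ ℝ) →L[ℝ] ℝ := m.mkContinuous 1 fun u => by
    simpa using abs_map_le_norm_of_nonneg_of_map_one hpos hone u
  have average := fun f => exists_invariant_dual_eq_on_invariant hC f (M := M) hone hinv
  refine ⟨fun f => ?_, fun x hx hann => ?_⟩
  · obtain ⟨f₁, hf₁, heq⟩ := average f
    exact ⟨f₁, f - f₁, hf₁, fun x hx => by simp [heq x hx], by abel⟩
  · obtain ⟨f, -, hfx⟩ := exists_dual_vector'' ℝ x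
    obtain ⟨f₁, hf₁, heq⟩ := average f
    have hnorm : ‖x‖ = 0 := by
      exact_mod_cast (hfx.symm.trans (heq x hx).symm).trans (hann f₁ hf₁)
    exact norm_eq_zero.mp hnorm

/-- Let `π` be a uniformly bounded representation of an amenable discrete group `G` on
a Banach space `X`. Then (i) `X* = X*_π̄ + Ann(X_π)` and
(ii) `X_π ∩ Ann(X*_π̄) = {0}`. -/
theorem amenable_dual_decomposition_and_trivial_intersection
    {G X : Type*} [Group G] [NormedAddCommGroup X] [NormedSpace ℝ X] [CompleteSpace X]
    (hG : IsAmenable G) (π : G →* (X ≃L[ℝ] X))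
    (hub : ∃ C : ℝ, ∀ g : G, ‖((π g : X ≃L[ℝ] X) : X →L[ℝ] X)‖ ≤ C) :
    (∀ f : StrongDual ℝ X, ∃ f₁ f₂ : StrongDual ℝ X,
      (∀ (g : G) (x : X), f₁ (π g x) = f₁ x) ∧
      (∀ x : X, (∀ g : G, π g x = x) → f₂ x = 0) ∧
      f = f₁ + f₂) ∧
    (∀ x : X, (∀ g : G, π g x = x) →
      (∀ f : StrongDual ℝ X, (∀ (g : G) (y : X), f (π g y) = f y) → f x = 0) →
      x = 0) :=
  amenable_dual_decomposition_and_trivial_intersection_general hG π hub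
end

section
/- Let π be a representation of a group G on a Banach space X, and suppose Y is a closed subspace of X with X = X_π ⊕ Y (direct sum) such that Y is π(G)-invariant (π(g)Y ⊆ Y for all g ∈ G). Then Y ⊇ Ann(X*_π̄). -/
/-! Since `X_π` and `Y` are closed, the projection `P` onto `X_π` along `Y` is continuous
(closed graph theorem). It is `π`-invariant because `π(g)` fixes `X_π` and preserves `Y`, so
every functional `φ` on `X_π` pulls back to a `π̄`-invariant functional `φ ∘ P`. A vector `x`
annihilated by all of these has `φ (P x) = 0` for every `φ`, hence `P x = 0` by Hahn–Banach,
i.e. `x ∈ Y`. -/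

/-- The subspace `X_π` of vectors invariant under a representation `π`. -/
def invariantVectors {G X : Type*} [Group G] [NormedAddCommGroup X] [NormedSpace ℝ X]
    (π : G →* (X ≃L[ℝ] X)) : Submodule ℝ X where
  carrier := {x : X | ∀ g : G, π g x = x}
  add_mem' := by
    intro a b ha hb g
    rw [map_add, ha g, hb g]
  zero_mem' := by
    intro g
    rw [map_zero]
  smul_mem' := by
    intro c x hx g
    rw [map_smul, hx g]

theorem Submodule.projectionOnto_map_eq {R E F : Type*} [Ring R] [AddCommGroup E] [Module R E]
    [FunLike F E E] [LinearMapClass F R E E] {p q : Submodule R E} (h : IsCompl p q) (T : F)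
    (hp : ∀ x ∈ p, T x = x) (hq : ∀ y ∈ q, T y ∈ q) (x : E) :
    p.projectionOnto q h (T x) = p.projectionOnto q h x := by
  rw [← sub_eq_zero, ← map_sub, projectionOnto_apply_eq_zero_iff]
  obtain ⟨a, y, ha, hy, rfl⟩ := codisjoint_iff_exists_add_eq.mp h.codisjoint x
  rw [map_add, hp a ha, add_sub_add_left_eq_sub]
  exact q.sub_mem (hq y hy) hy

theorem isClosed_invariantVectors {G X : Type*} [Group G] [NormedAddCommGroup X]
    [NormedSpace ℝ X] (π : G →* (X ≃L[ℝ] X)) : IsClosed (invariantVectors π : Set X) := by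
  have : (invariantVectors π : Set X) = ⋂ g, {x | π g x = x} := by
    ext x
    simp [invariantVectors]
  rw [this]
  exact isClosed_iInter fun g => isClosed_eq (π g).continuous continuous_id

/-- Let `π` be a representation of a group `G` on a Banach space `X`, and suppose `Y`
is a closed `π(G)`-invariant subspace of `X` with `X = X_π ⊕ Y`. Then
`Y ⊇ Ann(X*_π̄)`. -/
theorem invariant_complement_contains_preannihilator
    {G X : Type*} [Group G] [NormedAddCommGroup X] [NormedSpace ℝ X] [CompleteSpace X]
    (π : G →* (X ≃L[ℝ] X)) (Y : Submodule ℝ X) (hclosed : IsClosed (Y : Set X))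
    (hinv : ∀ (g : G), ∀ y ∈ Y, π g y ∈ Y)
    (hcompl : IsCompl (invariantVectors π) Y) :
    ∀ x : X,
      (∀ f : StrongDual ℝ X, (∀ (g : G) (y : X), f (π g y) = f y) → f x = 0) →
      x ∈ Y := by
  intro x hx
  have htop : (invariantVectors π).IsTopCompl Y :=
    Submodule.IsCompl.isTopCompl_of_isClosed hcompl (isClosed_invariantVectors π) hclosed
  let P := (invariantVectors π).projectionOntoL Y htop
  have hP_inv (g : G) (z : X) : P (π g z) = P z :=
    (invariantVectors π).projectionOnto_map_eq hcompl (π g) (fun a ha => ha g) (hinv g) z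
  have hPx : P x = 0 :=
    SeparatingDual.eq_zero_of_forall_dual_eq_zero fun φ =>
      hx (φ.comp P) fun g z => congrArg φ (hP_inv g z)
  exact (Submodule.projectionOntoL_apply_eq_zero_iff htop).mp hPx
end

section
/- Let a group G act on a compact metric space K by homeomorphisms, and suppose the action is Lyapunov stable. Let π be the induced representation of G on C(K) given by (π(g)φ)(x) = φ(g⁻¹x). Then for every φ ∈ C(K), the orbit O(φ) = {π(g)φ : g ∈ G} is precompact (totally bounded) in the sup norm of C(K). -/
/-!
Lyapunov stability says exactly that the maps `x ↦ g • x` are uniformly equicontinuous, so the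
translates of the uniformly continuous `φ` are equicontinuous; they all take values in the compact
set `range φ`, and Arzelà–Ascoli applies.
-/

open Set

theorem UniformContinuous.comp_uniformEquicontinuous {ι α β γ : Type*} [UniformSpace α]
    [UniformSpace β] [UniformSpace γ] {φ : α → γ} (hφ : UniformContinuous φ)
    {F : ι → β → α} (hF : UniformEquicontinuous F) :
    UniformEquicontinuous fun i => φ ∘ F i :=
  fun _ hU => hF _ (hφ hU)

theorem uniformEquicontinuous_smul_of_dist {G K : Type*} [SMul G K] [PseudoMetricSpace K]
    (h : ∀ ε > (0 : ℝ), ∃ δ > (0 : ℝ), ∀ (g : G) (x y : K), dist x y < δ →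
      dist (g • x) (g • y) < ε) :
    UniformEquicontinuous fun (g : G) (x : K) => g • x :=
  Metric.uniformEquicontinuous_iff.2 fun ε hε =>
    let ⟨δ, hδ, hδε⟩ := h ε hε
    ⟨δ, hδ, fun x y hxy g => hδε g x y hxy⟩

theorem ContinuousMap.totallyBounded_range_of_equicontinuous {ι X α : Type*}
    [TopologicalSpace X] [CompactSpace X] [MetricSpace α] {F : ι → C(X, α)} {s : Set α}
    (hs : IsCompact s) (hF : Equicontinuous fun i => ⇑(F i)) (hFs : ∀ i x, F i x ∈ s) :
    TotallyBounded (range F) := by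
  let e := ContinuousMap.isometryEquivBoundedOfCompact X α
  let A := range (e ∘ F)
  have hA_equi : Equicontinuous ((↑) : A → X → α) := by
    convert hF.comp (rangeSplitting (e ∘ F)) using 1 with a
    funext a
    exact congrArg DFunLike.coe (apply_rangeSplitting (e ∘ F) a).symm
  have hA_mem : ∀ (f : BoundedContinuousFunction X α) (x : X), f ∈ A → f x ∈ s := by
    rintro _ x ⟨i, rfl⟩
    exact hFs i x
  have hA : TotallyBounded A :=
    (BoundedContinuousFunction.arzela_ascoli s hs A hA_mem hA_equi).totallyBounded.subset
      subset_closure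
  have hrange : range F = e.symm '' A := by
    rw [← range_comp]
    exact congrArg range (funext fun i => (e.symm_apply_apply (F i)).symm)
  rw [hrange]
  exact hA.image e.symm.isometry.uniformContinuous

/-- Let a group `G` act by homeomorphisms on a compact metric space `K`, with the
action Lyapunov stable. Let `π` be the induced representation on `C(K)`, given by
`(π g φ) x = φ (g⁻¹ • x)`. Then for every `φ ∈ C(K)` the orbit
`O(φ) = {π g φ : g ∈ G}` is totally bounded in the sup norm of `C(K)`. -/
theorem lyapunov_stable_orbit_totallyBounded
    {G K : Type*} [Group G] [MetricSpace K] [CompactSpace K] [MulAction G K]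
    [ContinuousConstSMul G K]
    (hLS : ∀ ε > (0 : ℝ), ∃ δ > (0 : ℝ),
      ∀ (g : G) (x y : K), dist x y < δ → dist (g • x) (g • y) < ε)
    (φ : C(K, ℝ)) :
    TotallyBounded
      {ψ : C(K, ℝ) | ∃ g : G,
        ψ = φ.comp ⟨fun x : K => g⁻¹ • x, continuous_const_smul _⟩} := by
  let orbit : G → C(K, ℝ) := fun g => φ.comp ⟨fun x : K => g⁻¹ • x, continuous_const_smul _⟩
  have horbit_equi : Equicontinuous fun g => ⇑(orbit g) :=
    ((CompactSpace.uniformContinuous_of_continuous φ.continuous).comp_uniformEquicontinuous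
      ((uniformEquicontinuous_smul_of_dist hLS).comp Inv.inv)).equicontinuous
  have horbit_mem : ∀ g x, orbit g x ∈ range φ := fun g x => mem_range_self _
  convert ContinuousMap.totallyBounded_range_of_equicontinuous (isCompact_range φ.continuous)
    horbit_equi horbit_mem using 1
  ext ψ
  exact exists_congr fun g => eq_comm
end

section
/- Suppose a group G acts on a compact metric space K by homeomorphisms, the action is Lyapunov stable, and the orbit of some point a ∈ K is dense in K. Then K carries at most one G-invariant regular Borel probability measure. -/
/-!
Lyapunov stability says that the maps `x ↦ g • x` form an equicontinuous family, so by
Arzelà–Ascoli the closure `T` of their image in the homeomorphism group is a compact group.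
Invariance of a measure passes to `T` by continuity, and `T` acts transitively, since its orbit
of `a` is compact and contains the dense `G`-orbit. Averaging over the Haar probability measure
`m` of `T` then shows that every `T`-invariant probability measure is the image of `m` under
`g ↦ g⁻¹ • a`.
-/

open MeasureTheory Set Topology
open scoped BoundedContinuousFunction

namespace Homeomorph

variable {X : Type*} [TopologicalSpace X]

def toContinuousMapPair (h : X ≃ₜ X) : C(X, X) × C(X, X) :=
  ((h : C(X, X)), (h.symm : C(X, X)))

/- The Arens topology: compact-open convergence of both `h` and `h⁻¹`. Controlling the inverse
makes inversion continuous, so that closures of subgroups are again groups. -/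
instance : TopologicalSpace (X ≃ₜ X) :=
  .induced toContinuousMapPair inferInstance

theorem isInducing_toContinuousMapPair : IsInducing (toContinuousMapPair (X := X)) := ⟨rfl⟩

theorem continuous_toContinuousMap : Continuous fun h : X ≃ₜ X => (h : C(X, X)) :=
  continuous_fst.comp isInducing_toContinuousMapPair.continuous

instance : ContinuousEvalConst (X ≃ₜ X) X X where
  continuous_eval_const x :=
    (continuous_eval_const (F := C(X, X)) x).comp continuous_toContinuousMap

instance [LocallyCompactSpace X] : ContinuousEval (X ≃ₜ X) X X where
  continuous_eval :=
    (continuous_eval (F := C(X, X))).comp (continuous_toContinuousMap.prodMap continuous_id)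

instance [LocallyCompactSpace X] : IsTopologicalGroup (X ≃ₜ X) where
  continuous_mul := by
    have hpair := isInducing_toContinuousMapPair (X := X).continuous
    refine isInducing_toContinuousMapPair.continuous_iff.2 (.prodMk ?_ ?_)
    · exact ContinuousMap.continuous_comp'.comp
        ((continuous_fst.comp (hpair.comp continuous_snd)).prodMk
          (continuous_fst.comp (hpair.comp continuous_fst)))
    · exact ContinuousMap.continuous_comp'.comp
        ((continuous_snd.comp (hpair.comp continuous_fst)).prodMk
          (continuous_snd.comp (hpair.comp continuous_snd)))
  continuous_inv := isInducing_toContinuousMapPair.continuous_iff.2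
    (continuous_swap.comp isInducing_toContinuousMapPair.continuous)

instance : MulAction (X ≃ₜ X) X where
  smul h x := h x
  one_smul _ := rfl
  mul_smul _ _ _ := rfl

instance [LocallyCompactSpace X] : ContinuousSMul (X ≃ₜ X) X :=
  ⟨continuous_eval⟩

instance [WeaklyLocallyCompactSpace X] [SigmaCompactSpace X]
    [TopologicalSpace.PseudoMetrizableSpace X] :
    TopologicalSpace.PseudoMetrizableSpace (X ≃ₜ X) :=
  isInducing_toContinuousMapPair.pseudoMetrizableSpace

theorem range_toContinuousMapPair :
    range (toContinuousMapPair (X := X)) =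
      {p | p.1.comp p.2 = .id X ∧ p.2.comp p.1 = .id X} := by
  ext ⟨f, g⟩
  constructor
  · rintro ⟨h, he⟩
    cases he
    exact ⟨ContinuousMap.ext h.apply_symm_apply, ContinuousMap.ext h.symm_apply_apply⟩
  · rintro ⟨hfg, hgf⟩
    exact ⟨⟨⟨f, g, fun x => congr($hgf x), fun x => congr($hfg x)⟩, f.continuous, g.continuous⟩,
      rfl⟩

theorem isClosedEmbedding_toContinuousMapPair [LocallyCompactSpace X] [T2Space X] :
    IsClosedEmbedding (toContinuousMapPair (X := X)) := by
  refine ⟨⟨isInducing_toContinuousMapPair, fun h h' e => ext fun x => congr(($e).1 x)⟩, ?_⟩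
  rw [range_toContinuousMapPair]
  exact (isClosed_eq (ContinuousMap.continuous_comp'.comp continuous_swap) continuous_const).inter
    (isClosed_eq ContinuousMap.continuous_comp' continuous_const)

def smulHom (G X : Type*) [Group G] [TopologicalSpace X] [MulAction G X]
    [ContinuousConstSMul G X] : G →* (X ≃ₜ X) where
  toFun := Homeomorph.smul
  map_one' := ext (one_smul G)
  map_mul' g h := ext (mul_smul g h)

theorem isClosed_setOf_map_eq [WeaklyLocallyCompactSpace X] [SigmaCompactSpace X]
    [TopologicalSpace.PseudoMetrizableSpace X] [MeasurableSpace X] [BorelSpace X]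
    (ρ : Measure X) [IsFiniteMeasure ρ] :
    IsClosed {h : X ≃ₜ X | ρ.map h = ρ} := by
  have hmap (h : X ≃ₜ X) (f : X →ᵇ ℝ) : ∫ y, f y ∂(ρ.map h) = ∫ x, f (h x) ∂ρ :=
    integral_map h.continuous.aemeasurable f.continuous.aestronglyMeasurable
  have : {h : X ≃ₜ X | ρ.map h = ρ} = ⋂ f : X →ᵇ ℝ, {h | ∫ x, f (h x) ∂ρ = ∫ x, f x ∂ρ} := by
    ext h
    simp only [mem_ofPred_eq, mem_iInter, ← hmap]
    exact ⟨fun hh f => by rw [hh], ext_of_forall_integral_eq_of_IsFiniteMeasure⟩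
  rw [this]
  refine isClosed_iInter fun f => isClosed_eq ?_ continuous_const
  exact continuous_of_dominated (fun h => (f.continuous.comp h.continuous).aestronglyMeasurable)
    (fun h => ae_of_all _ fun x => f.norm_coe_le_norm (h x)) (integrable_const _)
    (ae_of_all _ fun x => f.continuous.comp (continuous_eval_const x))

end Homeomorph

theorem ContinuousMap.isCompact_closure_range_of_equicontinuous {ι X Y : Type*}
    [TopologicalSpace X] [CompactSpace X] [MetricSpace Y] [CompactSpace Y]
    {F : ι → C(X, Y)} (hF : Equicontinuous fun i => ⇑(F i)) :
    IsCompact (closure (range F)) := by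
  let e := (ContinuousMap.isometryEquivBoundedOfCompact X Y).toHomeomorph
  have hrange : range F = e.symm '' range (e ∘ F) := by
    rw [range_comp]
    exact (e.symm_image_image _).symm
  have hbdd : IsCompact (closure (range (e ∘ F))) := by
    refine BoundedContinuousFunction.arzela_ascoli univ isCompact_univ _
      (fun _ _ _ => mem_univ _) ?_
    convert hF.comp (rangeSplitting (e ∘ F)) using 1
    funext j
    exact congr(⇑$((apply_rangeSplitting (e ∘ F) j).symm))
  rw [hrange, ← e.symm.image_closure]
  exact hbdd.image e.symm.continuous

theorem MonoidHom.isCompact_topologicalClosure_range_of_equicontinuous {G X : Type*} [Group G]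
    [MetricSpace X] [CompactSpace X] (φ : G →* (X ≃ₜ X))
    (hφ : Equicontinuous fun g => ⇑(φ g)) :
    IsCompact (φ.range.topologicalClosure : Set (X ≃ₜ X)) := by
  set S := closure (Set.range fun g => (φ g : C(X, X)))
  have hS : IsCompact S := ContinuousMap.isCompact_closure_range_of_equicontinuous hφ
  have hsub : closure (φ.range : Set (X ≃ₜ X)) ⊆
      Homeomorph.toContinuousMapPair ⁻¹' (S ×ˢ S) := by
    refine closure_minimal ?_ ((isClosed_closure.prod isClosed_closure).preimage
      Homeomorph.isInducing_toContinuousMapPair.continuous)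
    rintro _ ⟨g, rfl⟩
    exact ⟨subset_closure ⟨g, rfl⟩, subset_closure ⟨g⁻¹, by simp only [map_inv]; rfl⟩⟩
  exact (Homeomorph.isClosedEmbedding_toContinuousMapPair.isCompact_preimage (hS.prod hS))
    |>.of_isClosed_subset isClosed_closure hsub

theorem Subgroup.smulInvariantMeasure_topologicalClosure {X : Type*} [TopologicalSpace X]
    [LocallyCompactSpace X] [SigmaCompactSpace X] [TopologicalSpace.PseudoMetrizableSpace X]
    [MeasurableSpace X] [BorelSpace X] (H : Subgroup (X ≃ₜ X)) (ρ : Measure X)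
    [IsFiniteMeasure ρ] [SMulInvariantMeasure H X ρ] :
    SMulInvariantMeasure H.topologicalClosure X ρ := by
  have hH : (H : Set (X ≃ₜ X)) ⊆ {h | ρ.map h = ρ} := fun h hh =>
    MeasureTheory.map_smul (⟨h, hh⟩ : H) ρ
  refine ⟨fun h s hs => ?_⟩
  have hmap : ρ.map h.1 = ρ := closure_minimal hH (Homeomorph.isClosed_setOf_map_eq ρ) h.2
  change ρ ((h : X ≃ₜ X) ⁻¹' s) = ρ s
  rw [← Measure.map_apply h.1.continuous.measurable hs, hmap]

theorem MulAction.isPretransitive_of_dense_orbit {T X : Type*} [Group T] [TopologicalSpace T]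
    [CompactSpace T] [TopologicalSpace X] [T2Space X] [MulAction T X] [ContinuousSMul T X]
    {a : X} (h : Dense (orbit T a)) : IsPretransitive T X := by
  rw [isPretransitive_iff_orbit_eq_univ a, ← h.closure_eq]
  exact ((isCompact_range (continuous_id.smul continuous_const)).isClosed.closure_eq).symm

namespace MeasureTheory

instance Measure.isProbabilityMeasure_haarMeasure_top {T : Type*} [Group T]
    [TopologicalSpace T] [IsTopologicalGroup T] [CompactSpace T] [Nonempty T] [MeasurableSpace T]
    [BorelSpace T] :
    IsProbabilityMeasure (Measure.haarMeasure (⊤ : TopologicalSpace.PositiveCompacts T)) :=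
  ⟨by simpa using Measure.haarMeasure_self (K₀ := (⊤ : TopologicalSpace.PositiveCompacts T))⟩

section TransitiveAction

variable {T X : Type*} [Group T] [MeasurableSpace T] [MulAction T X]

theorem integral_inv_smul_smul {E : Type*} [NormedAddCommGroup E] [NormedSpace ℝ E]
    [MeasurableMul T] (m : Measure T) [m.IsMulLeftInvariant] (f : X → E) (k : T) (x : X) :
    ∫ g, f (g⁻¹ • k • x) ∂m = ∫ g, f (g⁻¹ • x) ∂m := by
  rw [← integral_mul_left_eq_self (fun g => f (g⁻¹ • k • x)) k]
  simp [mul_smul]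

variable [TopologicalSpace T] [IsTopologicalGroup T] [BorelSpace T]
  [TopologicalSpace X] [MeasurableSpace X] [BorelSpace X] [HasOuterApproxClosed X]
  [SecondCountableTopologyEither T X] [ContinuousSMul T X] [MulAction.IsPretransitive T X]

theorem eq_map_inv_smul_of_isPretransitive (m : Measure T) [IsProbabilityMeasure m]
    [m.IsMulLeftInvariant] (a : X) (ρ : Measure X) [IsProbabilityMeasure ρ]
    [SMulInvariantMeasure T X ρ] : ρ = m.map (fun g => g⁻¹ • a) := by
  refine ext_of_forall_integral_eq_of_IsFiniteMeasure fun f => ?_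
  have hint : Integrable (Function.uncurry fun g x => f (g⁻¹ • x)) (m.prod ρ) :=
    (f.compContinuous ⟨fun p : T × X => p.1⁻¹ • p.2, by fun_prop⟩).integrable _
  calc ∫ x, f x ∂ρ = ∫ g, ∫ x, f (g⁻¹ • x) ∂ρ ∂m := by simp [integral_smul_eq_self]
    _ = ∫ x, ∫ g, f (g⁻¹ • x) ∂m ∂ρ := integral_integral_swap hint
    _ = ∫ x, ∫ g, f (g⁻¹ • a) ∂m ∂ρ := by
      congr with x
      obtain ⟨k, rfl⟩ := MulAction.exists_smul_eq T a x
      exact integral_inv_smul_smul m f k a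
    _ = ∫ y, f y ∂(m.map fun g => g⁻¹ • a) := by
      rw [integral_map (by fun_prop) f.continuous.aestronglyMeasurable]
      simp

end TransitiveAction

end MeasureTheory

theorem lyapunov_stable_unique_invariant_measure_general
    {G K : Type*} [Group G] [MetricSpace K] [CompactSpace K]
    [MeasurableSpace K] [BorelSpace K] [MulAction G K]
    (hcont : ∀ g : G, Continuous fun x : K => g • x)
    (hLS : ∀ ε > (0 : ℝ), ∃ δ > (0 : ℝ),
      ∀ (g : G) (x y : K), dist x y < δ → dist (g • x) (g • y) < ε)
    (a : K) (hdense : Dense (MulAction.orbit G a))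
    (μ ν : Measure K) [IsProbabilityMeasure μ] [IsProbabilityMeasure ν]
    (hμinv : ∀ (g : G) (E : Set K), MeasurableSet E → μ ((fun x : K => g • x) ⁻¹' E) = μ E)
    (hνinv : ∀ (g : G) (E : Set K), MeasurableSet E → ν ((fun x : K => g • x) ⁻¹' E) = ν E) :
    μ = ν := by
  have : ContinuousConstSMul G K := ⟨hcont⟩
  set φ := Homeomorph.smulHom G K
  set T := φ.range.topologicalClosure
  have hequi : Equicontinuous fun g => ⇑(φ g) := by
    refine (Metric.uniformEquicontinuous_iff.2 fun ε hε => ?_).equicontinuous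
    obtain ⟨δ, hδ, h⟩ := hLS ε hε
    exact ⟨δ, hδ, fun x y hxy g => h g x y hxy⟩
  have : CompactSpace T :=
    isCompact_iff_compactSpace.1 (φ.isCompact_topologicalClosure_range_of_equicontinuous hequi)
  have : MulAction.IsPretransitive T K := by
    refine MulAction.isPretransitive_of_dense_orbit (a := a) (hdense.mono ?_)
    rintro _ ⟨g, rfl⟩
    exact ⟨⟨φ g, φ.range.le_topologicalClosure ⟨g, rfl⟩⟩, rfl⟩
  have hinvariant (ρ : Measure K) [IsProbabilityMeasure ρ]
      (hρ : ∀ (g : G) (E : Set K), MeasurableSet E → ρ ((fun x : K => g • x) ⁻¹' E) = ρ E) :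
      SMulInvariantMeasure T K ρ := by
    have : SMulInvariantMeasure φ.range K ρ := ⟨by rintro ⟨_, g, rfl⟩ E hE; exact hρ g E hE⟩
    exact φ.range.smulInvariantMeasure_topologicalClosure ρ
  have := hinvariant μ hμinv
  have := hinvariant ν hνinv
  borelize ↥T
  let m : Measure T := Measure.haarMeasure ⊤
  rw [eq_map_inv_smul_of_isPretransitive m a μ, eq_map_inv_smul_of_isPretransitive m a ν]

/-- Let a group `G` act by homeomorphisms on a compact metric space `K`, with the
action Lyapunov stable, and suppose the orbit of some point `a ∈ K` is dense. Then
`K` carries at most one `G`-invariant regular Borel probability measure. -/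
theorem lyapunov_stable_unique_invariant_measure
    {G K : Type*} [Group G] [MetricSpace K] [CompactSpace K]
    [MeasurableSpace K] [BorelSpace K] [MulAction G K]
    (hcont : ∀ g : G, Continuous fun x : K => g • x)
    (hLS : ∀ ε > (0 : ℝ), ∃ δ > (0 : ℝ),
      ∀ (g : G) (x y : K), dist x y < δ → dist (g • x) (g • y) < ε)
    (a : K) (hdense : Dense (MulAction.orbit G a))
    (μ ν : Measure K) [IsProbabilityMeasure μ] [IsProbabilityMeasure ν]
    (hμreg : μ.Regular) (hνreg : ν.Regular)
    (hμinv : ∀ (g : G) (E : Set K), MeasurableSet E → μ ((fun x : K => g • x) ⁻¹' E) = μ E)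
    (hνinv : ∀ (g : G) (E : Set K), MeasurableSet E → ν ((fun x : K => g • x) ⁻¹' E) = ν E) :
    μ = ν :=
  lyapunov_stable_unique_invariant_measure_general hcont hLS a hdense μ ν hμinv hνinv
end

section
/- Let π be a representation of a group G on a Banach space X such that every orbit O(x) = {π(g)x : g ∈ G} is precompact in X. Let E ⊆ X* be a bounded, π̄(G)-invariant subset. Then the family of maps {π̄(g)|_E : g ∈ G} from E to E is equicontinuous with respect to the relative weak-* topology on E. -/
/-!
The weak-* uniformity is induced by the evaluations `f ↦ f x`, so equicontinuity can be checked
one point `x` at a time. Since `π̄(g) f (x) = f (π(g⁻¹) x)`, it then suffices that the evaluations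
at the points of the totally bounded orbit of `x` are equicontinuous on the norm-bounded set `E`:
a functional weak-* close to `f₀` on a finite `δ`-net of the orbit stays close on the whole orbit,
because all functionals in `E` are uniformly Lipschitz.
-/

open Filter Topology Metric Set

theorem equicontinuous_pi_iff {ι X κ : Type*} {α : κ → Type*} [TopologicalSpace X]
    [∀ k, UniformSpace (α k)] {F : ι → X → ∀ k, α k} :
    Equicontinuous F ↔ ∀ k, Equicontinuous fun i x => F i x k := by
  rw [show Pi.uniformSpace α = _ from Pi.uniformSpace_eq α, equicontinuous_iInf_rng]
  refine forall_congr' fun k => ?_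
  let _ := UniformSpace.comap (Function.eval k) (inferInstance : UniformSpace (α k))
  exact (isUniformInducing_iff_uniformSpace.mpr rfl).equicontinuous_iff

theorem WeakBilin.equicontinuous_iff_forall_eval {ι X 𝕜 E F : Type*} [TopologicalSpace X]
    [CommRing 𝕜] [UniformSpace 𝕜] [IsUniformAddGroup 𝕜] [AddCommGroup E] [Module 𝕜 E]
    [AddCommGroup F] [Module 𝕜 F] {B : E →ₗ[𝕜] F →ₗ[𝕜] 𝕜} {Φ : ι → X → WeakBilin B} :
    letI := IsTopologicalAddGroup.rightUniformSpace (WeakBilin B)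
    Equicontinuous Φ ↔ ∀ y, Equicontinuous fun i x => B (Φ i x) y := by
  let _ := IsTopologicalAddGroup.rightUniformSpace (WeakBilin B)
  have := isUniformAddGroup_of_addCommGroup (G := WeakBilin B)
  let coeFn : WeakBilin B →+ (F → 𝕜) := AddMonoidHom.pi fun y => (B.flip y).toAddMonoidHom
  have hcoe : IsUniformInducing coeFn :=
    AddMonoidHom.isUniformInducing_of_isInducing (.induced _)
  exact hcoe.equicontinuous_iff.trans equicontinuous_pi_iff

theorem WeakDual.equicontinuous_eval_of_totallyBounded {𝕜 X : Type*} [NontriviallyNormedField 𝕜]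
    [NormedAddCommGroup X] [NormedSpace 𝕜 X] {K : Set X} (hK : TotallyBounded K)
    {E : Set (WeakDual 𝕜 X)} {M : ℝ} (hE : ∀ f ∈ E, ‖toStrongDual f‖ ≤ M) :
    Equicontinuous fun (k : K) (f : E) => (f : WeakDual 𝕜 X) k := by
  intro f₀
  rw [Metric.equicontinuousAt_iff_right]
  intro ε hε
  set L := |M| + 1
  have hL : 0 < L := by positivity
  have hnorm : ∀ h ∈ E, ‖toStrongDual h‖ ≤ L := fun h hh =>
    (hE h hh).trans ((le_abs_self M).trans (lt_add_one _).le)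
  obtain ⟨t, ht, hKt⟩ := Metric.totallyBounded_iff.mp hK (ε / 3 / L) (by positivity)
  have hnear : ∀ᶠ f : E in 𝓝 f₀, ∀ y ∈ t,
      dist ((f : WeakDual 𝕜 X) y) ((f₀ : WeakDual 𝕜 X) y) < ε / 3 :=
    (eventually_all_finite ht).2 fun y _ =>
      ((eval_continuous y).comp continuous_subtype_val).continuousAt.eventually
        (ball_mem_nhds _ (by positivity))
  filter_upwards [hnear] with f hf k
  obtain ⟨y, hy, hky⟩ := mem_iUnion₂.mp (hKt k.2)
  have hclose : ∀ h ∈ E, dist ((h : WeakDual 𝕜 X) k) (h y) < ε / 3 := fun h hh =>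
    calc dist (toStrongDual h k) (toStrongDual h y)
        ≤ ‖toStrongDual h‖ * dist (k : X) y := (toStrongDual h).dist_le_opNorm _ _
      _ ≤ L * dist (k : X) y := by gcongr; exact hnorm h hh
      _ < L * (ε / 3 / L) := by gcongr; exact hky
      _ = ε / 3 := by field_simp
  calc dist ((f₀ : WeakDual 𝕜 X) k) ((f : WeakDual 𝕜 X) k)
      ≤ dist ((f₀ : WeakDual 𝕜 X) k) ((f₀ : WeakDual 𝕜 X) y)
        + dist ((f₀ : WeakDual 𝕜 X) y) ((f : WeakDual 𝕜 X) y)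
        + dist ((f : WeakDual 𝕜 X) y) ((f : WeakDual 𝕜 X) k) := dist_triangle4 _ _ _ _
    _ < ε / 3 + ε / 3 + ε / 3 := by
      gcongr
      · exact hclose _ f₀.2
      · rw [dist_comm]; exact hf y hy
      · rw [dist_comm]; exact hclose _ f.2
    _ = ε := by ring

theorem dual_restriction_equicontinuous_of_precompact_orbits_general
    {G X : Type*} [Group G] [NormedAddCommGroup X] [NormedSpace ℝ X]
    (π : G →* (X ≃L[ℝ] X))
    (horb : ∀ x : X, TotallyBounded {y : X | ∃ g : G, y = π g x})
    (E : Set (WeakDual ℝ X))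
    (hbdd : ∃ M : ℝ, ∀ f ∈ E, ‖WeakDual.toStrongDual f‖ ≤ M) :
    letI : UniformSpace (WeakDual ℝ X) := IsTopologicalAddGroup.rightUniformSpace _
    Equicontinuous (fun g : G => fun f : E =>
      StrongDual.toWeakDual
        ((WeakDual.toStrongDual (f : WeakDual ℝ X)).comp
          ((π g⁻¹ : X ≃L[ℝ] X) : X →L[ℝ] X))) := by
  obtain ⟨M, hM⟩ := hbdd
  refine WeakBilin.equicontinuous_iff_forall_eval.2 fun x => ?_
  exact (WeakDual.equicontinuous_eval_of_totallyBounded (horb x) hM).comp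
    fun g => ⟨π g⁻¹ x, g⁻¹, rfl⟩

/-- Let `π` be a representation of a group `G` on a Banach space `X` with all orbits
precompact (totally bounded), and let `E ⊆ X*` be a bounded `π̄(G)`-invariant subset.
Then the family of maps `{π̄(g)|_E : g ∈ G}` is equicontinuous with respect to the
relative weak-* topology on `E` (the weak-* uniformity being the canonical uniformity
of the weak-* topological additive group structure). -/
theorem dual_restriction_equicontinuous_of_precompact_orbits
    {G X : Type*} [Group G] [NormedAddCommGroup X] [NormedSpace ℝ X] [CompleteSpace X]
    (π : G →* (X ≃L[ℝ] X))
    (horb : ∀ x : X, TotallyBounded {y : X | ∃ g : G, y = π g x})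
    (E : Set (WeakDual ℝ X))
    (hbdd : ∃ M : ℝ, ∀ f ∈ E, ‖WeakDual.toStrongDual f‖ ≤ M)
    (hinv : ∀ (g : G), ∀ f ∈ E,
      StrongDual.toWeakDual
        ((WeakDual.toStrongDual f).comp ((π g⁻¹ : X ≃L[ℝ] X) : X →L[ℝ] X)) ∈ E) :
    letI : UniformSpace (WeakDual ℝ X) := IsTopologicalAddGroup.rightUniformSpace _
    Equicontinuous (fun g : G => fun f : E =>
      StrongDual.toWeakDual
        ((WeakDual.toStrongDual (f : WeakDual ℝ X)).comp
          ((π g⁻¹ : X ≃L[ℝ] X) : X →L[ℝ] X))) :=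
  dual_restriction_equicontinuous_of_precompact_orbits_general π horb E hbdd
end

section
/- Let a group G act on a compact metric space K by homeomorphisms, and suppose the action is Lyapunov stable. Then the action is lower semi-continuous: for every open set U ⊆ K, the set {x ∈ K : there exists u ∈ U with φ(x) = φ(u) for all φ ∈ C(K)_π} is open in K. -/
/-!
Sup over `G` of the distances `d(gx, gy)` is a `G`-invariant pseudometric `D` which, by
Lyapunov stability, is uniformly dominated by `d` at small scales. Its distance between orbits,
`z ↦ inf_g D(gz, u)`, is then a continuous invariant function vanishing at `u`. So if `x` and `u`
are not separated by invariant functions, `u` lies in the closure of the orbit of `x`: some `gx`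
is close to `u`, and by equicontinuity so is `gx'` for every `x'` near `x`. As `x'` and `gx'` are
never separated, every `x'` near `x` has a point of `U` in its class.
-/

open Set Metric MulAction

section SupDist

variable (G : Type*) {K : Type*} [PseudoMetricSpace K]

noncomputable def supDist [SMul G K] (x y : K) : ℝ := ⨆ g : G, dist (g • x) (g • y)

noncomputable def orbitGap [SMul G K] (x y : K) : ℝ := ⨅ g : G, supDist G (g • x) y

variable {G}

section SMul

variable [SMul G K]

theorem supDist_nonneg (x y : K) : 0 ≤ supDist G x y :=
  Real.iSup_nonneg fun _ => dist_nonneg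

theorem supDist_self (x : K) : supDist G x x = 0 := by
  simp [supDist]

theorem supDist_comm (x y : K) : supDist G x y = supDist G y x := by
  simp only [supDist, dist_comm]

theorem orbitGap_nonneg (x y : K) : 0 ≤ orbitGap G x y :=
  Real.iInf_nonneg fun _ => supDist_nonneg _ _

variable [BoundedSpace K]

theorem bddAbove_range_dist_smul (x y : K) :
    BddAbove (range fun g : G => dist (g • x) (g • y)) :=
  let ⟨C, hC⟩ := boundedSpace_iff.mp ‹BoundedSpace K›
  ⟨C, forall_mem_range.2 fun _ => hC _ _⟩

theorem supDist_triangle [Nonempty G] (x y z : K) :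
    supDist G x z ≤ supDist G x y + supDist G y z :=
  ciSup_le fun g => (dist_triangle _ (g • y) _).trans <|
    add_le_add (le_ciSup (bddAbove_range_dist_smul x y) g)
      (le_ciSup (bddAbove_range_dist_smul y z) g)

end SMul

section Group

variable [Group G] [MulAction G K]

theorem supDist_smul (h : G) (x y : K) : supDist G (h • x) (h • y) = supDist G x y := by
  simp only [supDist, smul_smul]
  exact (Equiv.mulRight h).iSup_comp (g := fun g => dist (g • x) (g • y))

theorem orbitGap_smul (h : G) (x y : K) : orbitGap G (h • x) y = orbitGap G x y := by
  simp only [orbitGap, smul_smul]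
  exact (Equiv.mulRight h).iInf_comp (g := fun g => supDist G (g • x) y)

theorem orbitGap_self (x : K) : orbitGap G x x = 0 := by
  refine le_antisymm ?_ (orbitGap_nonneg x x)
  calc orbitGap G x x ≤ supDist G ((1 : G) • x) x :=
        ciInf_le ⟨0, forall_mem_range.2 fun _ => supDist_nonneg _ _⟩ 1
    _ = 0 := by rw [one_smul, supDist_self]

variable [BoundedSpace K]

theorem dist_le_supDist (x y : K) : dist x y ≤ supDist G x y := by
  calc dist x y = dist ((1 : G) • x) ((1 : G) • y) := by rw [one_smul, one_smul]
    _ ≤ supDist G x y := le_ciSup (bddAbove_range_dist_smul x y) 1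

theorem orbitGap_le_supDist_add (x y z : K) :
    orbitGap G x z ≤ supDist G x y + orbitGap G y z := by
  rw [← sub_le_iff_le_add']
  refine le_ciInf fun g => sub_le_iff_le_add'.2 ?_
  calc orbitGap G x z ≤ supDist G (g • x) z :=
        ciInf_le ⟨0, forall_mem_range.2 fun _ => supDist_nonneg _ _⟩ g
    _ ≤ supDist G (g • x) (g • y) + supDist G (g • y) z := supDist_triangle _ _ _
    _ = supDist G x y + supDist G (g • y) z := by rw [supDist_smul]

theorem mem_closure_orbit_of_orbitGap_eq_zero {x y : K} (h : orbitGap G x y = 0) :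
    y ∈ closure (orbit G x) := by
  refine Metric.mem_closure_iff.2 fun ε hε => ?_
  obtain ⟨g, hg⟩ := exists_lt_of_ciInf_lt (h.trans_lt hε)
  refine ⟨g • x, mem_orbit x g, ?_⟩
  rw [dist_comm]
  exact (dist_le_supDist _ _).trans_lt hg

end Group

end SupDist

namespace UniformEquicontinuous

variable {G K : Type*} [PseudoMetricSpace K]

theorem exists_supDist_le [SMul G K] [Nonempty G]
    (hG : UniformEquicontinuous fun g : G => (g • · : K → K))
    {ε : ℝ} (hε : 0 < ε) : ∃ δ > 0, ∀ x y : K, dist x y < δ → supDist G x y ≤ ε := by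
  obtain ⟨δ, hδ, h⟩ := Metric.uniformEquicontinuous_iff.mp hG ε hε
  exact ⟨δ, hδ, fun x y hxy => ciSup_le fun g => (h x y hxy g).le⟩

variable [Group G] [MulAction G K] [BoundedSpace K]

theorem uniformContinuous_orbitGap (hG : UniformEquicontinuous fun g : G => (g • · : K → K))
    (y : K) : UniformContinuous (orbitGap G · y) := by
  refine Metric.uniformContinuous_iff.2 fun ε hε => ?_
  obtain ⟨δ, hδ, h⟩ := hG.exists_supDist_le (half_pos hε)
  refine ⟨δ, hδ, fun a b hab => ?_⟩
  rw [Real.dist_eq, abs_sub_lt_iff]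
  constructor
  · linarith [orbitGap_le_supDist_add (G := G) a b y, h a b hab]
  · linarith [orbitGap_le_supDist_add (G := G) b a y, supDist_comm (G := G) a b, h a b hab]

theorem mem_closure_orbit_of_forall_invariant_eq
    (hG : UniformEquicontinuous fun g : G => (g • · : K → K)) {x y : K}
    (h : ∀ φ : C(K, ℝ), (∀ (g : G) (z : K), φ (g • z) = φ z) → φ x = φ y) :
    y ∈ closure (orbit G x) := by
  have hφ := h ⟨fun z => orbitGap G z y, (hG.uniformContinuous_orbitGap y).continuous⟩
    fun g z => orbitGap_smul g z y
  exact mem_closure_orbit_of_orbitGap_eq_zero (hφ.trans (orbitGap_self y))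

end UniformEquicontinuous

theorem lyapunov_stable_action_lower_semicontinuous_general
    {G K : Type*} [Group G] [MetricSpace K] [CompactSpace K] [MulAction G K]
    (hLS : ∀ ε > (0 : ℝ), ∃ δ > (0 : ℝ),
      ∀ (g : G) (x y : K), dist x y < δ → dist (g • x) (g • y) < ε)
    (U : Set K) (hU : IsOpen U) :
    IsOpen {x : K | ∃ u ∈ U,
      ∀ φ : C(K, ℝ), (∀ (g : G) (z : K), φ (g • z) = φ z) → φ x = φ u} := by
  have hG : UniformEquicontinuous fun g : G => (g • · : K → K) :=
    Metric.uniformEquicontinuous_iff.2 fun ε hε =>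
      let ⟨δ, hδ, h⟩ := hLS ε hε
      ⟨δ, hδ, fun x y hxy g => h g x y hxy⟩
  refine Metric.isOpen_iff.2 fun x ⟨u, huU, hxu⟩ => ?_
  obtain ⟨ε, hε, hball⟩ := Metric.isOpen_iff.mp hU u huU
  obtain ⟨δ, hδ, hLSδ⟩ := hLS (ε / 2) (half_pos hε)
  obtain ⟨_, ⟨g, rfl⟩, hgx⟩ :=
    Metric.mem_closure_iff.1 (hG.mem_closure_orbit_of_forall_invariant_eq hxu) (ε / 2) (half_pos hε)
  refine ⟨δ, hδ, fun x' hx' => ⟨g • x', hball ?_, fun φ hφ => (hφ g x').symm⟩⟩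
  calc dist (g • x') u ≤ dist (g • x') (g • x) + dist (g • x) u := dist_triangle _ _ _
    _ < ε / 2 + ε / 2 := add_lt_add (hLSδ g x' x hx') (by rwa [dist_comm])
    _ = ε := add_halves ε

/-- Let a group `G` act by homeomorphisms on a compact metric space `K`, with the
action Lyapunov stable. Then the action is lower semi-continuous: for every open
`U ⊆ K`, the set of points whose `C(K)_π`-equivalence class meets `U` is open, where
`x ~ u` iff `φ x = φ u` for every invariant continuous function `φ`. -/
theorem lyapunov_stable_action_lower_semicontinuous
    {G K : Type*} [Group G] [MetricSpace K] [CompactSpace K] [MulAction G K]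
    [ContinuousConstSMul G K]
    (hLS : ∀ ε > (0 : ℝ), ∃ δ > (0 : ℝ),
      ∀ (g : G) (x y : K), dist x y < δ → dist (g • x) (g • y) < ε)
    (U : Set K) (hU : IsOpen U) :
    IsOpen {x : K | ∃ u ∈ U,
      ∀ φ : C(K, ℝ), (∀ (g : G) (z : K), φ (g • z) = φ z) → φ x = φ u} :=
  lyapunov_stable_action_lower_semicontinuous_general hLS U hU
end

section
/- Let a group G act on a compact metric space K by homeomorphisms and let π be the induced representation of G on C(K). Suppose the action is lower semi-continuous: for every open U ⊆ K, the set {x ∈ K : there exists u ∈ U with φ(x) = φ(u) for all φ ∈ C(K)_π} is open. Then C(K)_π is a complemented subspace of C(K), i.e., there exists a bounded linear projection of C(K) onto C(K)_π. -/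
/-!
Points of `K` not separated by invariant continuous functions are the fibres of a continuous
surjection `q : K → Y` onto a compact Hausdorff space, and the invariant functions are exactly the
`f ∘ q`. Lower semicontinuity says that `q` is open, so for every `ε` there are partitions of unity
on `Y` subordinate to the images of `ε`-balls. Refining them at the scales `2⁻ⁿ`, each atom being
split into atoms within `2⁻ⁿ` of it, gives kernels `c ↦ μₙ(c)` of finitely supported probability
measures concentrating near `q⁻¹(c)`, whose atoms stay within `2 · 2⁻ⁿ` of their ancestors in
`μₙ`. So `∫ φ dμₙ` converges uniformly for every `φ` (this is Michael's selection argument), the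
limit is a bounded averaging operator `L` with `L (f ∘ q) = f`, and `φ ↦ L φ ∘ q` is the
projection.
-/

open Filter Topology

universe v

theorem exists_seq_of_forall_exists_succ {α : Type*} {P : ℕ → α → Prop}
    {R : ℕ → α → α → Prop} {a : α} (h₀ : P 0 a) (h : ∀ n a, P n a → ∃ b, P (n + 1) b ∧ R n a b) :
    ∃ f : ℕ → α, ∀ n, P n (f n) ∧ R n (f n) (f (n + 1)) := by
  choose g hg using h
  let s : (n : ℕ) → {a // P n a} :=
    fun n => Nat.rec ⟨a, h₀⟩ (fun n x => ⟨g n x.1 x.2, (hg n x.1 x.2).1⟩) n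
  exact ⟨fun n => (s n).1, fun n => ⟨(s n).2, (hg n _ (s n).2).2⟩⟩

theorem Finset.abs_sum_mul_le {ι : Type*} (s : Finset ι) {w a : ι → ℝ} {δ : ℝ}
    (hw : ∀ i ∈ s, 0 ≤ w i) (ha : ∀ i ∈ s, w i ≠ 0 → |a i| ≤ δ) :
    |∑ i ∈ s, w i * a i| ≤ δ * ∑ i ∈ s, w i := by
  rw [Finset.mul_sum]
  refine (Finset.abs_sum_le_sum_abs _ _).trans (Finset.sum_le_sum fun i hi => ?_)
  rw [abs_mul, abs_of_nonneg (hw i hi), mul_comm δ]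
  rcases eq_or_ne (w i) 0 with h | h
  · simp [h]
  · exact mul_le_mul_of_nonneg_left (ha i hi h) (hw i hi)

theorem ContinuousMap.eventually_dist_le {X α ι : Type*} [PseudoMetricSpace X] [CompactSpace X]
    [PseudoMetricSpace α] (φ : C(X, α)) {l : Filter ι} {u : ι → ℝ} (hu : Tendsto u l (𝓝 0))
    {δ : ℝ} (hδ : 0 < δ) : ∀ᶠ n in l, ∀ a a', dist a a' ≤ u n → dist (φ a) (φ a') ≤ δ := by
  obtain ⟨η, hη, hφ⟩ := Metric.uniformContinuous_iff.1
    (CompactSpace.uniformContinuous_of_continuous φ.continuous) δ hδ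
  filter_upwards [hu.eventually (gt_mem_nhds hη)] with n hn a a' ha
  exact (hφ (ha.trans_lt hn)).le

/-- A continuous family `c ↦ ∑ i, weight i c • δ (atom i)` of finitely supported measures on `X`
parametrised by `Y`. -/
structure AtomicKernel (Y : Type*) (X : Type v) [TopologicalSpace Y] where
  ι : Type v
  [fintype : Fintype ι]
  weight : ι → C(Y, ℝ)
  atom : ι → X

namespace AtomicKernel

attribute [instance] fintype

variable {Y X : Type*} [TopologicalSpace Y] [PseudoMetricSpace X]

noncomputable def integral (k : AtomicKernel Y X) : C(X, ℝ) →L[ℝ] C(Y, ℝ) :=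
  ∑ i, (ContinuousMap.evalCLM ℝ (k.atom i)).smulRight (k.weight i)

theorem integral_apply (k : AtomicKernel Y X) (φ : C(X, ℝ)) (c : Y) :
    k.integral φ c = ∑ i, k.weight i c * φ (k.atom i) := by
  simp [integral, mul_comm]

structure IsMarkov (k : AtomicKernel Y X) : Prop where
  nonneg : ∀ i c, 0 ≤ k.weight i c
  sum_eq_one : ∀ c, ∑ i, k.weight i c = 1

def IsSubordinate (k : AtomicKernel Y X) (q : X → Y) (ε : ℝ) : Prop :=
  ∀ i, tsupport (k.weight i) ⊆ q '' Metric.ball (k.atom i) ε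

/-- The identity for all `ψ` says that the weights of `k'` sum along the fibres of `σ` to those
of `k`. -/
def Refines (k' k : AtomicKernel Y X) (b : ℝ) : Prop :=
  ∃ σ : k'.ι → k.ι, (∀ j, dist (k'.atom j) (k.atom (σ j)) ≤ b) ∧
    ∀ (ψ : k.ι → ℝ) (c : Y), ∑ j, k'.weight j c * ψ (σ j) = ∑ i, k.weight i c * ψ i

theorem Refines.refl (k : AtomicKernel Y X) : k.Refines k 0 :=
  ⟨id, fun _ => (dist_self _).le, fun _ _ => rfl⟩

theorem Refines.mono {k k' : AtomicKernel Y X} {b b' : ℝ} (h : k'.Refines k b) (hb : b ≤ b') :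
    k'.Refines k b' :=
  let ⟨σ, hdist, hsum⟩ := h
  ⟨σ, fun j => (hdist j).trans hb, hsum⟩

theorem Refines.trans {k₁ k₂ k₃ : AtomicKernel Y X} {b₁ b₂ : ℝ} (h₃ : k₃.Refines k₂ b₂)
    (h₂ : k₂.Refines k₁ b₁) : k₃.Refines k₁ (b₁ + b₂) := by
  obtain ⟨τ, hτ, hτsum⟩ := h₃
  obtain ⟨σ, hσ, hσsum⟩ := h₂
  refine ⟨σ ∘ τ, fun j => ?_, fun ψ c => (hτsum (ψ ∘ σ) c).trans (hσsum ψ c)⟩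
  calc dist (k₃.atom j) (k₁.atom (σ (τ j)))
      ≤ dist (k₃.atom j) (k₂.atom (τ j)) + dist (k₂.atom (τ j)) (k₁.atom (σ (τ j))) :=
        dist_triangle _ _ _
    _ ≤ b₁ + b₂ := by linarith [hτ j, hσ (τ j)]

theorem Refines.isMarkov {k k' : AtomicKernel Y X} {b : ℝ} (h : k'.Refines k b) (hk : k.IsMarkov)
    (hk' : ∀ j c, 0 ≤ k'.weight j c) : k'.IsMarkov := by
  obtain ⟨σ, -, hsum⟩ := h
  refine ⟨hk', fun c => ?_⟩
  simpa [hk.sum_eq_one c] using hsum 1 c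

theorem refines_of_le {k : ℕ → AtomicKernel Y X} {ε : ℕ → ℝ}
    (h : ∀ n, (k (n + 1)).Refines (k n) (ε n)) {n m : ℕ} (hnm : n ≤ m) :
    (k m).Refines (k n) (∑ i ∈ Finset.Ico n m, ε i) := by
  induction m, hnm using Nat.le_induction with
  | base => simpa using Refines.refl (k n)
  | succ m hnm ih => simpa [Finset.sum_Ico_succ_top hnm] using (h m).trans ih

def bind (k : AtomicKernel Y X) (p : k.ι → AtomicKernel Y X) : AtomicKernel Y X where
  ι := Σ i, (p i).ι
  weight j := k.weight j.1 * (p j.1).weight j.2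
  atom j := (p j.1).atom j.2

theorem bind_refines (k : AtomicKernel Y X) (p : k.ι → AtomicKernel Y X) {b : ℝ}
    (hsum : ∀ i, ∀ c ∈ tsupport (k.weight i), ∑ j, (p i).weight j c = 1)
    (hdist : ∀ i j, dist ((p i).atom j) (k.atom i) ≤ b) : (k.bind p).Refines k b := by
  refine ⟨Sigma.fst, fun j => hdist j.1 j.2, fun ψ c => ?_⟩
  refine (Fintype.sum_sigma _).trans (Finset.sum_congr rfl fun i _ => ?_)
  change ∑ j, k.weight i c * (p i).weight j c * ψ i = k.weight i c * ψ i
  by_cases hc : c ∈ tsupport (k.weight i)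
  · rw [← Finset.sum_mul, ← Finset.mul_sum, hsum i c hc, mul_one]
  · simp [image_eq_zero_of_notMem_tsupport hc]

theorem isSubordinate_bind {k : AtomicKernel Y X} {p : k.ι → AtomicKernel Y X} {q : X → Y}
    {ε : ℝ} (hp : ∀ i, (p i).IsSubordinate q ε) : (k.bind p).IsSubordinate q ε :=
  fun j => (tsupport_mul_subset_right (f := k.weight j.1)).trans (hp j.1 j.2)

section CompactSpace

variable [CompactSpace Y]

theorem Refines.dist_integral_le {k k' : AtomicKernel Y X} {b δ : ℝ} (h : k'.Refines k b)
    (hk' : k'.IsMarkov) {φ : C(X, ℝ)} (hφ : ∀ a a', dist a a' ≤ b → dist (φ a) (φ a') ≤ δ)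
    (hδ : 0 ≤ δ) : dist (k'.integral φ) (k.integral φ) ≤ δ := by
  obtain ⟨σ, hdist, hsum⟩ := h
  refine (ContinuousMap.dist_le hδ).2 fun c => ?_
  have hdiff : k'.integral φ c - k.integral φ c =
      ∑ j, k'.weight j c * (φ (k'.atom j) - φ (k.atom (σ j))) := by
    simp only [integral_apply, mul_sub, Finset.sum_sub_distrib,
      ← hsum (fun i => φ (k.atom i)) c]
  rw [Real.dist_eq, hdiff]
  simpa [hk'.sum_eq_one c] using Finset.univ.abs_sum_mul_le (fun j _ => hk'.nonneg j c)
    fun j _ _ => hφ _ _ (hdist j)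

theorem IsSubordinate.dist_integral_comp_le {k : AtomicKernel Y X} {q : C(X, Y)} {ε δ : ℝ}
    (hsub : k.IsSubordinate q ε) (hk : k.IsMarkov) {f : C(Y, ℝ)}
    (hf : ∀ a a', dist a a' ≤ ε → dist (f (q a)) (f (q a')) ≤ δ) (hδ : 0 ≤ δ) :
    dist (k.integral (f.comp q)) f ≤ δ := by
  refine (ContinuousMap.dist_le hδ).2 fun c => ?_
  have hdiff : k.integral (f.comp q) c - f c = ∑ i, k.weight i c * (f (q (k.atom i)) - f c) := by
    simp [integral_apply, mul_sub, Finset.sum_sub_distrib, ← Finset.sum_mul, hk.sum_eq_one c]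
  rw [Real.dist_eq, hdiff]
  simpa [hk.sum_eq_one c] using Finset.univ.abs_sum_mul_le (fun i _ => hk.nonneg i c)
    fun i _ hi => by
      obtain ⟨y, hy, rfl⟩ := hsub i (subset_closure hi)
      exact hf _ _ (Metric.mem_ball'.1 hy).le

variable [T2Space Y]

theorem exists_isSubordinate_sum_eq_one_on {q : C(X, Y)} (hq : IsOpenMap q) {T : Set Y}
    (hT : IsClosed T) {S : Set X} (hTS : T ⊆ q '' S) {ε : ℝ} (hε : 0 < ε) :
    ∃ k : AtomicKernel Y X, (∀ i c, 0 ≤ k.weight i c) ∧ (∀ c ∈ T, ∑ i, k.weight i c = 1) ∧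
      (∀ i, k.atom i ∈ S) ∧ k.IsSubordinate q ε := by
  have hcover : T ⊆ ⋃ x : S, q '' Metric.ball (x : X) ε := by
    rintro _ hc
    obtain ⟨x, hx, rfl⟩ := hTS hc
    exact Set.mem_iUnion.2 ⟨⟨x, hx⟩, x, Metric.mem_ball_self hε, rfl⟩
  obtain ⟨t, ht⟩ := hT.isCompact.elim_finite_subcover _ (fun _ => hq _ Metric.isOpen_ball) hcover
  obtain ⟨f, hf⟩ := PartitionOfUnity.exists_isSubordinate hT
    (fun x : t => q '' Metric.ball (x : X) ε) (fun _ => hq _ Metric.isOpen_ball)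
    (by simpa only [Set.iUnion_subtype, Finset.mem_coe] using ht)
  refine ⟨⟨t, fun x => f x, fun x => x.1⟩, fun x => f.nonneg x, fun c hc => ?_,
    fun x => x.1.2, hf⟩
  simpa [finsum_eq_sum_of_fintype] using f.sum_eq_one hc

theorem exists_refines {k : AtomicKernel Y X} {q : C(X, Y)} (hq : IsOpenMap q) {ε ε' : ℝ}
    (hk : k.IsMarkov) (hsub : k.IsSubordinate q ε) (hε' : 0 < ε') :
    ∃ k' : AtomicKernel Y X, k'.IsMarkov ∧ k'.IsSubordinate q ε' ∧ k'.Refines k ε := by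
  choose p hpos hsum hball hpsub using fun i =>
    exists_isSubordinate_sum_eq_one_on hq (isClosed_tsupport (k.weight i)) (hsub i) hε'
  refine ⟨k.bind p, ?_, isSubordinate_bind hpsub, ?_⟩
  · exact (k.bind_refines p hsum fun i j => (hball i j).le).isMarkov hk
      fun j c => mul_nonneg (hk.nonneg _ c) (hpos _ _ c)
  · exact k.bind_refines p hsum fun i j => (hball i j).le

theorem exists_seq_refines {q : C(X, Y)} (hq : IsOpenMap q) (hsurj : Function.Surjective q) :
    ∃ k : ℕ → AtomicKernel Y X, ∀ n, (k n).IsMarkov ∧ (k n).IsSubordinate q ((1 / 2) ^ n) ∧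
      (k (n + 1)).Refines (k n) ((1 / 2) ^ n) := by
  obtain ⟨k₀, hpos, hsum, -, hsub⟩ := exists_isSubordinate_sum_eq_one_on hq isClosed_univ
    (by rw [Set.image_univ, hsurj.range_eq]) one_pos
  obtain ⟨k, hk⟩ := exists_seq_of_forall_exists_succ
    (P := fun n (k : AtomicKernel Y X) => k.IsMarkov ∧ k.IsSubordinate q ((1 / 2) ^ n))
    (R := fun n k k' => k'.Refines k ((1 / 2) ^ n))
    ⟨⟨hpos, fun c => hsum c trivial⟩, by simpa using hsub⟩ fun n k hk => by
      obtain ⟨k', hk'⟩ :=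
        exists_refines hq hk.1 hk.2 (by positivity : (0 : ℝ) < (1 / 2) ^ (n + 1))
      exact ⟨k', ⟨hk'.1, hk'.2.1⟩, hk'.2.2⟩
  exact ⟨k, fun n => ⟨(hk n).1.1, (hk n).1.2, (hk n).2⟩⟩

end CompactSpace

end AtomicKernel

theorem exists_averaging_operator_of_isOpenMap {X Y : Type*} [PseudoMetricSpace X]
    [CompactSpace X] [TopologicalSpace Y] [T2Space Y] (q : C(X, Y)) (hq : IsOpenMap q)
    (hsurj : Function.Surjective q) :
    ∃ L : C(X, ℝ) →L[ℝ] C(Y, ℝ), ∀ f : C(Y, ℝ), L (f.comp q) = f := by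
  have : CompactSpace Y := hsurj.compactSpace q.continuous
  obtain ⟨k, hk⟩ := AtomicKernel.exists_seq_refines hq hsurj
  have hu : Tendsto (fun n : ℕ => 2 * (1 / 2 : ℝ) ^ n) atTop (𝓝 0) := by
    simpa using (tendsto_pow_atTop_nhds_zero_of_lt_one (r := (1 / 2 : ℝ))
      (by norm_num) (by norm_num)).const_mul 2
  have hrefines : ∀ n m, n ≤ m → (k m).Refines (k n) (2 * (1 / 2) ^ n) := fun n m h =>
    (AtomicKernel.refines_of_le (fun n => (hk n).2.2) h).mono <|
      (geom_sum_Ico_le_of_lt_one (by norm_num) (by norm_num)).trans_eq (by ring)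
  have hcauchy : ∀ φ, CauchySeq fun n => (k n).integral φ := fun φ =>
    Metric.cauchySeq_iff'.2 fun δ hδ => by
      obtain ⟨N, hN⟩ := (φ.eventually_dist_le hu (half_pos hδ)).exists
      exact ⟨N, fun n hn => ((hrefines N n hn).dist_integral_le (hk n).1 hN
        (half_pos hδ).le).trans_lt (half_lt_self hδ)⟩
  let L := continuousLinearMapOfTendsto (fun n => (k n).integral)
    (tendsto_pi_nhds.2 fun φ => (hcauchy φ).tendsto_limUnder)
  refine ⟨L, fun f => tendsto_nhds_unique (hcauchy _).tendsto_limUnder ?_⟩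
  refine Metric.tendsto_nhds.2 fun δ hδ => ?_
  filter_upwards [(f.comp q).eventually_dist_le hu (half_pos hδ)] with n hn
  refine ((hk n).2.1.dist_integral_comp_le (hk n).1 (fun a a' h => hn a a' (h.trans ?_))
    (half_pos hδ).le).trans_lt (half_lt_self hδ)
  linarith [pow_pos (by norm_num : (0 : ℝ) < 1 / 2) n]

section Invariant

variable (G K : Type*) [SMul G K] [TopologicalSpace K]

def invariantFunctionSetoid : Setoid K where
  r x y := ∀ φ : C(K, ℝ), (∀ (g : G) (z : K), φ (g • z) = φ z) → φ x = φ y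
  iseqv := ⟨fun _ _ _ => rfl, fun h φ hφ => (h φ hφ).symm,
    fun h₁ h₂ φ hφ => (h₁ φ hφ).trans (h₂ φ hφ)⟩

variable {G K}

def liftInvariant (φ : C(K, ℝ)) (hφ : ∀ (g : G) (z : K), φ (g • z) = φ z) :
    C(Quotient (invariantFunctionSetoid G K), ℝ) :=
  ⟨Quotient.lift φ fun _ _ h => h φ hφ, φ.continuous.quotient_lift _⟩

instance : T2Space (Quotient (invariantFunctionSetoid G K)) := by
  refine ⟨fun a b hab => ?_⟩
  induction a using Quotient.inductionOn with | h x => ?_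
  induction b using Quotient.inductionOn with | h y => ?_
  obtain ⟨φ, hφ, hne⟩ : ∃ φ : C(K, ℝ), (∀ (g : G) (z : K), φ (g • z) = φ z) ∧ φ x ≠ φ y := by
    by_contra! h
    exact hab (Quotient.sound h)
  exact separated_by_continuous (liftInvariant φ hφ).continuous hne

theorem isOpenMap_quotient_mk_invariantFunctionSetoid
    (hlsc : ∀ U : Set K, IsOpen U → IsOpen {x : K | ∃ u ∈ U,
      ∀ φ : C(K, ℝ), (∀ (g : G) (z : K), φ (g • z) = φ z) → φ x = φ u}) :
    IsOpenMap (Quotient.mk (invariantFunctionSetoid G K)) := by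
  intro U hU
  change IsOpen (Quotient.mk _ ⁻¹' (Quotient.mk _ '' U))
  convert hlsc U hU using 1
  ext x
  simp only [Set.mem_preimage, Set.mem_image, Set.mem_ofPred_eq, Quotient.eq]
  exact exists_congr fun u => and_congr_right fun _ => forall₂_congr fun φ _ => eq_comm

end Invariant

theorem lower_semicontinuous_action_invariant_functions_complemented_general
    {G K : Type*} [Group G] [MetricSpace K] [CompactSpace K] [MulAction G K]
    (hlsc : ∀ U : Set K, IsOpen U → IsOpen {x : K | ∃ u ∈ U,
      ∀ φ : C(K, ℝ), (∀ (g : G) (z : K), φ (g • z) = φ z) → φ x = φ u}) :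
    ∃ P : C(K, ℝ) →L[ℝ] C(K, ℝ),
      (∀ (φ : C(K, ℝ)) (g : G) (x : K), (P φ) (g • x) = (P φ) x) ∧
      (∀ φ : C(K, ℝ), (∀ (g : G) (x : K), φ (g • x) = φ x) → P φ = φ) := by
  let q : C(K, Quotient (invariantFunctionSetoid G K)) :=
    ⟨Quotient.mk _, continuous_quotient_mk'⟩
  obtain ⟨L, hL⟩ := exists_averaging_operator_of_isOpenMap q
    (isOpenMap_quotient_mk_invariantFunctionSetoid hlsc) Quotient.mk_surjective
  let compQ : C(Quotient (invariantFunctionSetoid G K), ℝ) →L[ℝ] C(K, ℝ) :=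
    ⟨(ContinuousMap.compRightAlgHom ℝ ℝ q).toLinearMap,
      ContinuousMap.compRightAlgHom_continuous ℝ ℝ q⟩
  refine ⟨compQ ∘L L, fun φ g x => ?_, fun φ hφ => ?_⟩
  · exact congrArg (L φ) (Quotient.sound fun ψ hψ => hψ g x)
  · exact congrArg (fun f => f.comp q) (hL (liftInvariant φ hφ))

/-- Let a group `G` act by homeomorphisms on a compact metric space `K`, and let `π`
be the induced representation on `C(K)`. If the action is lower semi-continuous (for
every open `U ⊆ K` the set of points whose `C(K)_π`-equivalence class meets `U` is
open), then `C(K)_π` is complemented in `C(K)`: there is a bounded linear projection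
of `C(K)` onto the subspace of invariant functions. -/
theorem lower_semicontinuous_action_invariant_functions_complemented
    {G K : Type*} [Group G] [MetricSpace K] [CompactSpace K] [MulAction G K]
    [ContinuousConstSMul G K]
    (hlsc : ∀ U : Set K, IsOpen U → IsOpen {x : K | ∃ u ∈ U,
      ∀ φ : C(K, ℝ), (∀ (g : G) (z : K), φ (g • z) = φ z) → φ x = φ u}) :
    ∃ P : C(K, ℝ) →L[ℝ] C(K, ℝ),
      (∀ (φ : C(K, ℝ)) (g : G) (x : K), (P φ) (g • x) = (P φ) x) ∧
      (∀ φ : C(K, ℝ), (∀ (g : G) (x : K), φ (g • x) = φ x) → P φ = φ) :=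
  lower_semicontinuous_action_invariant_functions_complemented_general hlsc
end

section
/- Let G be the multiplicative group of positive rationals acting on K = [0,1] by q·x = x^q, and let π be the induced representation of G on C([0,1]) given by (π(q)φ)(x) = φ(x^{1/q}). Then: (1) C(K)_π equals the subspace of constant functions; (2) both Y₁ = {φ ∈ C(K) : φ(0) = 0} and Y₂ = {φ ∈ C(K) : φ(1) = 0} are closed π(G)-invariant subspaces satisfying C(K) = C(K)_π ⊕ Yᵢ; and (3) Y₁ ≠ Y₂. In particular, a π(G)-invariant complement of the subspace of invariant vectors need not be unique. -/
/-!
An invariant `φ` is constant on each orbit `{x ^ q}`. The orbit of any `x ∈ (0, 1]` accumulates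
at `1` (take `q = 1/(n+1)`) and the orbit of `1/2` accumulates at `0` (take `q = n+1`), so by
continuity `φ` takes the value `φ 1` everywhere. Both endpoints are fixed by the action, so the
functions vanishing at either endpoint form an invariant complement of the constants, and the
identity function lies in the first complement but not in the second.
-/

/-- The unit interval `[0, 1]`. -/
def I01 : Set ℝ := Set.Icc (0 : ℝ) 1

/-- For a positive rational `q`, the map `x ↦ x ^ q` of `[0, 1]` into itself, as a
continuous map. The action of the multiplicative group `ℚ₊` of positive rationals on
`[0, 1]` is `q • x = x ^ q`, and the induced representation `π` of `ℚ₊` on `C([0,1])`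
is `(π q φ) x = φ (x ^ (1/q)) = (φ.comp (powMap q⁻¹)) x`; as `q` runs over all
positive rationals, the operators `φ ↦ φ.comp (powMap q)` are exactly the operators
`π q`. -/
noncomputable def powMap (q : {q : ℚ // 0 < q}) : C(↥I01, ↥I01) :=
  ⟨fun x => ⟨(x : ℝ) ^ ((q : ℚ) : ℝ), by
      obtain ⟨x, hx0, hx1⟩ := x
      have hq : (0 : ℝ) < ((q : ℚ) : ℝ) := by exact_mod_cast q.2
      exact ⟨Real.rpow_nonneg hx0 _, Real.rpow_le_one hx0 hx1 hq.le⟩⟩, by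
    apply Continuous.subtype_mk
    have hq : (0 : ℝ) < ((q : ℚ) : ℝ) := by exact_mod_cast q.2
    exact continuous_subtype_val.rpow_const fun _ => Or.inr hq.le⟩

/-- The point `0` of `[0, 1]`. -/
def z01 : ↥I01 := ⟨0, by constructor <;> norm_num⟩

/-- The point `1` of `[0, 1]`. -/
def o01 : ↥I01 := ⟨1, by constructor <;> norm_num⟩

open Filter Topology

theorem apply_eq_of_tendsto_of_forall_apply_eq {ι X Y : Type*} [TopologicalSpace X]
    [TopologicalSpace Y] [T2Space Y] {f : X → Y} (hf : Continuous f) {l : Filter ι} [l.NeBot]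
    {u : ι → X} {x : X} (hu : Tendsto u l (𝓝 x)) {c : Y} (hc : ∀ i, f (u i) = c) : f x = c :=
  tendsto_nhds_unique ((hf.tendsto x).comp hu) (by simp [Function.comp_def, hc])

theorem ContinuousMap.existsUnique_eq_const_add_of_apply_eq_zero {X R : Type*}
    [TopologicalSpace X] [TopologicalSpace R] [AddCommGroup R] [IsTopologicalAddGroup R]
    (x₀ : X) (φ : C(X, R)) :
    ∃! p : R × C(X, R), p.2 x₀ = 0 ∧ φ = ContinuousMap.const X p.1 + p.2 := by
  refine ⟨(φ x₀, φ - const X (φ x₀)), ⟨by simp, by ext; simp⟩, ?_⟩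
  rintro ⟨c, ψ⟩ ⟨hψ, rfl⟩
  have hc : c + ψ x₀ = c := by rw [hψ, add_zero]
  ext <;> simp [hc]

theorem Real.tendsto_rpow_inv_nat_add_one_atTop {x : ℝ} (hx : 0 < x) :
    Tendsto (fun n : ℕ => x ^ ((n : ℝ) + 1)⁻¹) atTop (𝓝 1) := by
  simpa [Function.comp_def] using
    ((Real.continuousAt_const_rpow hx.ne').tendsto).comp (tendsto_inv_atTop_zero.comp
      (tendsto_natCast_atTop_atTop.atTop_add tendsto_const_nhds))

theorem Real.tendsto_rpow_nat_add_one_atTop {x : ℝ} (hx₀ : 0 ≤ x) (hx₁ : x < 1) :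
    Tendsto (fun n : ℕ => x ^ ((n : ℝ) + 1)) atTop (𝓝 0) := by
  have := (tendsto_pow_atTop_nhds_zero_of_lt_one hx₀ hx₁).comp (tendsto_add_atTop_nat 1)
  simpa [Function.comp_def, ← Real.rpow_natCast] using this

theorem coe_powMap_apply (q : {q : ℚ // 0 < q}) (x : ↥I01) :
    (powMap q x : ℝ) = (x : ℝ) ^ ((q : ℚ) : ℝ) :=
  rfl

theorem powMap_z01 (q : {q : ℚ // 0 < q}) : powMap q z01 = z01 :=
  Subtype.ext (Real.zero_rpow (by exact_mod_cast q.2.ne'))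

theorem powMap_o01 (q : {q : ℚ // 0 < q}) : powMap q o01 = o01 :=
  Subtype.ext (Real.one_rpow _)

theorem tendsto_powMap_inv_nat_add_one {x : ↥I01} (hx : 0 < (x : ℝ)) :
    Tendsto (fun n : ℕ => powMap ⟨((n : ℚ) + 1)⁻¹, by positivity⟩ x) atTop (𝓝 o01) := by
  rw [tendsto_subtype_rng]
  simpa [coe_powMap_apply, o01, z01] using Real.tendsto_rpow_inv_nat_add_one_atTop hx

theorem tendsto_powMap_nat_add_one {x : ↥I01} (hx : (x : ℝ) < 1) :
    Tendsto (fun n : ℕ => powMap ⟨(n : ℚ) + 1, by positivity⟩ x) atTop (𝓝 z01) := by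
  rw [tendsto_subtype_rng]
  simpa [coe_powMap_apply, o01, z01] using Real.tendsto_rpow_nat_add_one_atTop x.2.1 hx

theorem apply_eq_apply_o01_of_comp_powMap_eq {φ : C(↥I01, ℝ)}
    (hφ : ∀ q : {q : ℚ // 0 < q}, φ.comp (powMap q) = φ) (x : ↥I01) : φ x = φ o01 := by
  have horbit (q : {q : ℚ // 0 < q}) (y : ↥I01) : φ (powMap q y) = φ y :=
    DFunLike.congr_fun (hφ q) y
  have hpos {y : ↥I01} (hy : 0 < (y : ℝ)) : φ y = φ o01 :=
    (apply_eq_of_tendsto_of_forall_apply_eq φ.continuous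
      (tendsto_powMap_inv_nat_add_one hy) fun _ => horbit _ y).symm
  rcases x.2.1.lt_or_eq with hx | hx
  · exact hpos hx
  · let half : ↥I01 := ⟨1 / 2, by norm_num [I01]⟩
    have hz : φ z01 = φ half := apply_eq_of_tendsto_of_forall_apply_eq φ.continuous
      (tendsto_powMap_nat_add_one (x := half) (by norm_num [half])) fun _ => horbit _ half
    rw [show x = z01 from Subtype.ext hx.symm, hz, hpos (by norm_num [half])]

/-- For the action of the group `ℚ₊` of positive rationals on `K = [0,1]` by
`q • x = x ^ q` and the induced representation `π` on `C([0,1])`: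
(1) the invariant functions `C(K)_π` are exactly the constants;
(2) both `Y₁ = {φ : φ 0 = 0}` and `Y₂ = {φ : φ 1 = 0}` are closed `π(ℚ₊)`-invariant
subspaces with `C(K) = C(K)_π ⊕ Yᵢ` (every `φ` is uniquely a constant plus an element
of `Yᵢ`); and (3) `Y₁ ≠ Y₂`. In particular a `π(G)`-invariant complement of the
subspace of invariant vectors need not be unique. -/
theorem qpos_action_on_unit_interval_two_invariant_complements :
    (∀ φ : C(↥I01, ℝ),
      (∀ q : {q : ℚ // 0 < q}, φ.comp (powMap q) = φ) → ∃ c : ℝ, ∀ x : ↥I01, φ x = c) ∧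
    (IsClosed {φ : C(↥I01, ℝ) | φ z01 = 0} ∧
      (∀ φ : C(↥I01, ℝ), φ z01 = 0 →
        ∀ q : {q : ℚ // 0 < q}, (φ.comp (powMap q)) z01 = 0) ∧
      (∀ φ : C(↥I01, ℝ), ∃! p : ℝ × C(↥I01, ℝ),
        p.2 z01 = 0 ∧ φ = ContinuousMap.const (↥I01) p.1 + p.2)) ∧
    (IsClosed {φ : C(↥I01, ℝ) | φ o01 = 0} ∧
      (∀ φ : C(↥I01, ℝ), φ o01 = 0 →
        ∀ q : {q : ℚ // 0 < q}, (φ.comp (powMap q)) o01 = 0) ∧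
      (∀ φ : C(↥I01, ℝ), ∃! p : ℝ × C(↥I01, ℝ),
        p.2 o01 = 0 ∧ φ = ContinuousMap.const (↥I01) p.1 + p.2)) ∧
    {φ : C(↥I01, ℝ) | φ z01 = 0} ≠ {φ : C(↥I01, ℝ) | φ o01 = 0} := by
  refine ⟨fun φ hφ => ⟨φ o01, apply_eq_apply_o01_of_comp_powMap_eq hφ⟩,
    ⟨isClosed_eq (continuous_eval_const z01) continuous_const,
      fun φ hφ q => by rw [ContinuousMap.comp_apply, powMap_z01, hφ],
      ContinuousMap.existsUnique_eq_const_add_of_apply_eq_zero z01⟩,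
    ⟨isClosed_eq (continuous_eval_const o01) continuous_const,
      fun φ hφ q => by rw [ContinuousMap.comp_apply, powMap_o01, hφ],
      ContinuousMap.existsUnique_eq_const_add_of_apply_eq_zero o01⟩, fun h => ?_⟩
  have hval : (⟨Subtype.val, continuous_subtype_val⟩ : C(↥I01, ℝ)) ∈ {φ | φ z01 = 0} := rfl
  rw [h] at hval
  exact one_ne_zero (α := ℝ) hval
end
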